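/- arXiv:1412.3341 — 6 statements merged into one kernel-verified Lean document; each statement's English description precedes it below -/
import Mathlib

section
/- Let M be a matroid on a finite ground set E and L a list assignment with all lists of size k. If M admits a proper coloring in which every element receives a color from {1,...,k} (equivalently, E can be partitioned into k independent sets), then M admits a proper coloring in which every element receives a color from its list L(e). (Seymour's theorem: ch(M) = χ(M).) -/
/-!
Rado's matroid partition theorem does the work: for matroids `N γ` on a common ground set, a
finite set `S` can be coloured so that each colour class `γ` is independent in `N γ` as soon as
`|X| ≤ ∑ γ, rk_{N γ} X` for all `X ⊆ S`. Take `N γ` to be `M` restricted to the set `A γ` of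
elements whose list contains `γ`. A matroid that splits into `k` independent sets satisfies
`|Y| ≤ k rk Y`, so counting incidences, `k |X| = ∑ γ |X ∩ A γ| ≤ k ∑ γ rk (X ∩ A γ)`.

Rado's theorem is proved by induction on `S`, carrying sets `C γ` already coloured `γ`; the
condition becomes nonnegativity of the surplus below. The next element `e` joins some `C γ`
unless every colour is blocked by a tight set (surplus zero) spanning `e`. By submodularity the
union of tight sets is tight; it spans `e` in every colour, so adding `e` to it makes the surplus
negative.
-/

open Set

namespace Matroid

variable {α : Type*} {M : Matroid α} {I X Y : Set α} {e : α}

-- Junk value `0` on sets of infinite rank.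
noncomputable def rk (M : Matroid α) (X : Set α) : ℕ := (M.eRk X).toNat

lemma rk_le_rk_of_subset (hXY : X ⊆ Y) (hY : Y.Finite) : M.rk X ≤ M.rk Y :=
  ENat.toNat_le_toNat (M.eRk_mono hXY) (M.isRkFinite_of_finite hY).eRk_lt_top.ne

lemma rk_union_add_rk_inter_le (hX : X.Finite) (hY : Y.Finite) :
    M.rk (X ∪ Y) + M.rk (X ∩ Y) ≤ M.rk X + M.rk Y := by
  have hfin : ∀ Z : Set α, Z.Finite → M.eRk Z ≠ ⊤ :=
    fun Z hZ ↦ (M.isRkFinite_of_finite hZ).eRk_lt_top.ne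
  unfold rk
  rw [← ENat.toNat_add (hfin _ (hX.union hY)) (hfin _ (hX.inter_of_left Y)),
    ← ENat.toNat_add (hfin _ hX) (hfin _ hY), add_comm]
  exact ENat.toNat_le_toNat (M.eRk_submod X Y) (by simp [hfin _ hX, hfin _ hY])

lemma Indep.rk_eq_ncard (hI : M.Indep I) : M.rk I = I.ncard := by
  rw [rk, hI.eRk_eq_encard, ncard_def]

lemma Indep.ncard_le_rk_of_subset (hI : M.Indep I) (hIX : I ⊆ X) (hX : X.Finite) :
    I.ncard ≤ M.rk X :=
  hI.rk_eq_ncard ▸ rk_le_rk_of_subset hIX hX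

lemma Indep.rk_insert_eq_of_not_indep (hI : M.Indep I) (he : ¬ M.Indep (insert e I)) :
    M.rk (insert e I) = M.rk I := by
  rw [hI.insert_indep_iff, not_or, mem_sdiff, not_and_or, not_not] at he
  obtain ⟨heE | hecl, -⟩ := he
  · rw [rk, eRk_insert_of_notMem_ground I heE, rk]
  · rw [rk, ← eRk_insert_closure_eq, insert_eq_of_mem hecl, eRk_closure_eq, rk]

lemma rk_insert_eq_of_subset (h : M.rk (insert e X) = M.rk X) (hXY : X ⊆ Y) (hY : Y.Finite) :
    M.rk (insert e Y) = M.rk Y := by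
  have hsubmod := rk_union_add_rk_inter_le (M := M) ((hY.subset hXY).insert e) hY
  rw [insert_union, union_eq_self_of_subset_left hXY] at hsubmod
  have hX : M.rk X ≤ M.rk (insert e X ∩ Y) :=
    rk_le_rk_of_subset (subset_inter (subset_insert e X) hXY) (hY.inter_of_right _)
  have hmono := rk_le_rk_of_subset (M := M) (subset_insert e Y) (hY.insert e)
  omega

lemma rk_restrict (M : Matroid α) (R X : Set α) : (M ↾ R).rk X = M.rk (X ∩ R) := by
  rw [rk, restrict_eRk_eq', rk]

lemma card_le_card_mul_rk {κ : Type*} [DecidableEq κ] (c : α → κ) (K : Finset κ)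
    (Y : Finset α) (hcY : ∀ x ∈ Y, c x ∈ K) (hY : ∀ i ∈ K, M.Indep ↑(Y.filter (c · = i))) :
    Y.card ≤ K.card * M.rk ↑Y := by
  calc Y.card = ∑ i ∈ K, (Y.filter (c · = i)).card := Finset.card_eq_sum_card_fiberwise hcY
    _ ≤ ∑ i ∈ K, M.rk ↑Y := Finset.sum_le_sum fun i hi ↦ by
      rw [← ncard_coe_finset]
      exact (hY i hi).ncard_le_rk_of_subset
        (Finset.coe_subset.2 (Finset.filter_subset _ Y)) Y.finite_toSet
    _ = K.card * M.rk ↑Y := by rw [Finset.sum_const, smul_eq_mul]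

lemma card_le_sum_rk_filter_mem {ι : Type*} [DecidableEq ι] (L : α → Finset ι)
    (Γ : Finset ι) (X : Finset α) {k : ℕ} (hLΓ : ∀ x ∈ X, L x ⊆ Γ)
    (hL : ∀ x ∈ X, (L x).card = k) (hX : ∀ Y ⊆ X, Y.card ≤ k * M.rk ↑Y) :
    X.card ≤ ∑ γ ∈ Γ, M.rk ↑(X.filter (γ ∈ L ·)) := by
  obtain rfl | hk := k.eq_zero_or_pos
  · obtain rfl : X = ∅ := by simpa using hX X subset_rfl
    simp
  refine Nat.le_of_mul_le_mul_left ?_ hk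
  calc k * X.card = ∑ x ∈ X, (L x).card := by
        rw [Finset.sum_congr rfl hL, Finset.sum_const, smul_eq_mul, mul_comm]
    _ = ∑ x ∈ X, (Γ.bipartiteAbove (fun x γ ↦ γ ∈ L x) x).card :=
        Finset.sum_congr rfl fun x hx ↦ by
          rw [Finset.bipartiteAbove, Finset.filter_mem_eq_inter,
            Finset.inter_eq_right.2 (hLΓ x hx)]
    _ = ∑ γ ∈ Γ, (X.filter (γ ∈ L ·)).card :=
        Finset.sum_card_bipartiteAbove_eq_sum_card_bipartiteBelow _
    _ ≤ ∑ γ ∈ Γ, k * M.rk ↑(X.filter (γ ∈ L ·)) :=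
        Finset.sum_le_sum fun γ _ ↦ hX _ (Finset.filter_subset _ X)
    _ = k * ∑ γ ∈ Γ, M.rk ↑(X.filter (γ ∈ L ·)) := (Finset.mul_sum ..).symm

end Matroid

open Matroid

section Rado

variable {α ι : Type*} [DecidableEq α]

-- Colour `γ` can take at most `rk (X ∪ C γ) - |C γ|` further elements of `X`.
noncomputable def radoSurplus (N : ι → Matroid α) (Γ : Finset ι) (C : ι → Finset α)
    (X : Finset α) : ℤ :=
  ∑ γ ∈ Γ, (((N γ).rk ↑(X ∪ C γ) : ℤ) - (C γ).card) - X.card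

variable {N : ι → Matroid α} {Γ : Finset ι} {C : ι → Finset α} {S X Y : Finset α} {e : α}
  {γ : ι}

lemma radoSurplus_empty (hC : ∀ γ ∈ Γ, (N γ).Indep ↑(C γ)) : radoSurplus N Γ C ∅ = 0 := by
  refine sub_eq_zero.2 (Finset.sum_eq_zero fun γ hγ ↦ ?_)
  rw [Finset.empty_union, (hC γ hγ).rk_eq_ncard, ncard_coe_finset, sub_self]

lemma radoSurplus_union_add_inter_le (N : ι → Matroid α) (Γ : Finset ι) (C : ι → Finset α)
    (X Y : Finset α) :
    radoSurplus N Γ C (X ∪ Y) + radoSurplus N Γ C (X ∩ Y) ≤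
      radoSurplus N Γ C X + radoSurplus N Γ C Y := by
  have hrk : ∀ γ ∈ Γ, (((N γ).rk ↑(X ∪ Y ∪ C γ) : ℤ) - (C γ).card) +
      (((N γ).rk ↑(X ∩ Y ∪ C γ) : ℤ) - (C γ).card) ≤
      (((N γ).rk ↑(X ∪ C γ) : ℤ) - (C γ).card) + (((N γ).rk ↑(Y ∪ C γ) : ℤ) - (C γ).card) := by
    intro γ _
    have := (N γ).rk_union_add_rk_inter_le (X ∪ C γ).finite_toSet (Y ∪ C γ).finite_toSet
    rw [← Finset.coe_union, ← Finset.coe_inter, ← Finset.union_union_distrib_right,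
      ← Finset.inter_union_distrib_right] at this
    omega
  have hcard := Finset.card_union_add_card_inter X Y
  have hsum := Finset.sum_le_sum hrk
  simp only [radoSurplus, Finset.sum_add_distrib] at hsum ⊢
  omega

lemma radoSurplus_union_eq_zero (hS : ∀ X ⊆ S, 0 ≤ radoSurplus N Γ C X) (hXS : X ⊆ S)
    (hYS : Y ⊆ S) (hX : radoSurplus N Γ C X = 0) (hY : radoSurplus N Γ C Y = 0) :
    radoSurplus N Γ C (X ∪ Y) = 0 := by
  have := radoSurplus_union_add_inter_le N Γ C X Y
  have := hS _ (Finset.union_subset hXS hYS)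
  have := hS (X ∩ Y) (Finset.inter_subset_left.trans hXS)
  omega

lemma radoSurplus_biUnion_eq_zero {κ : Type*} (hC : ∀ γ ∈ Γ, (N γ).Indep ↑(C γ))
    (hS : ∀ X ⊆ S, 0 ≤ radoSurplus N Γ C X) {Δ : Finset κ} {T : κ → Finset α}
    (hTS : ∀ δ ∈ Δ, T δ ⊆ S) (hT : ∀ δ ∈ Δ, radoSurplus N Γ C (T δ) = 0) :
    radoSurplus N Γ C (Δ.biUnion T) = 0 := by
  classical
  induction Δ using Finset.induction_on with
  | empty => exact radoSurplus_empty hC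
  | insert δ Δ _ ih =>
    simp only [Finset.mem_insert, forall_eq_or_imp] at hTS hT
    rw [Finset.biUnion_insert]
    exact radoSurplus_union_eq_zero hS hTS.1 (Finset.biUnion_subset.2 hTS.2) hT.1 (ih hTS.2 hT.2)

lemma radoSurplus_update_insert [DecidableEq ι] (hγ : γ ∈ Γ) (he : e ∉ C γ) (X : Finset α) :
    radoSurplus N Γ (Function.update C γ (insert e (C γ))) X =
      radoSurplus N Γ C X + (N γ).rk (insert e ↑(X ∪ C γ)) - (N γ).rk ↑(X ∪ C γ) - 1 := by
  set g : ι → Finset α → ℤ := fun δ Y ↦ ((N δ).rk ↑(X ∪ Y) : ℤ) - Y.card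
  have hsum : ∑ δ ∈ Γ, g δ (Function.update C γ (insert e (C γ)) δ) =
      ∑ δ ∈ Γ, g δ (C δ) + g γ (insert e (C γ)) - g γ (C γ) := by
    simp_rw [Function.apply_update g, Finset.sum_update_of_mem hγ,
      Finset.sum_eq_add_sum_sdiff_singleton_of_mem hγ (fun δ ↦ g δ (C δ))]
    ring
  simp only [radoSurplus, g] at hsum ⊢
  rw [hsum, Finset.union_insert, Finset.coe_insert, Finset.card_insert_of_notMem he]
  push_cast
  ring

lemma radoSurplus_insert (he : e ∉ X)
    (h : ∀ γ ∈ Γ, (N γ).rk (insert e ↑(X ∪ C γ)) = (N γ).rk ↑(X ∪ C γ)) :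
    radoSurplus N Γ C (insert e X) = radoSurplus N Γ C X - 1 := by
  have hsum : ∑ γ ∈ Γ, (((N γ).rk ↑(insert e X ∪ C γ) : ℤ) - (C γ).card) =
      ∑ γ ∈ Γ, (((N γ).rk ↑(X ∪ C γ) : ℤ) - (C γ).card) :=
    Finset.sum_congr rfl fun γ hγ ↦ by rw [Finset.insert_union, Finset.coe_insert, h γ hγ]
  rw [radoSurplus, radoSurplus, hsum, Finset.card_insert_of_notMem he]
  push_cast
  ring

lemma exists_tight_rk_insert_eq [DecidableEq ι] (hC : ∀ γ ∈ Γ, (N γ).Indep ↑(C γ))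
    (hS : ∀ X ⊆ S, 0 ≤ radoSurplus N Γ C X) (hγ : γ ∈ Γ) (he : e ∉ C γ)
    (hext : (N γ).Indep (insert e ↑(C γ)) →
      ∃ X ⊆ S, radoSurplus N Γ (Function.update C γ (insert e (C γ))) X < 0) :
    ∃ T ⊆ S, radoSurplus N Γ C T = 0 ∧
      (N γ).rk (insert e ↑(T ∪ C γ)) = (N γ).rk ↑(T ∪ C γ) := by
  by_cases hind : (N γ).Indep (insert e ↑(C γ))
  · obtain ⟨X, hXS, hX⟩ := hext hind
    rw [radoSurplus_update_insert hγ he] at hX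
    have := hS X hXS
    have := rk_le_rk_of_subset (M := N γ) (Set.subset_insert e ↑(X ∪ C γ))
      ((X ∪ C γ).finite_toSet.insert e)
    exact ⟨X, hXS, by omega, by omega⟩
  · refine ⟨∅, Finset.empty_subset S, radoSurplus_empty hC, ?_⟩
    rw [Finset.empty_union]
    exact (hC γ hγ).rk_insert_eq_of_not_indep hind

lemma exists_color_radoSurplus_update_insert_nonneg [DecidableEq ι]
    (hC : ∀ γ ∈ Γ, (N γ).Indep ↑(C γ)) (heC : ∀ γ ∈ Γ, e ∉ C γ) (heS : e ∉ S)
    (hS : ∀ X ⊆ insert e S, 0 ≤ radoSurplus N Γ C X) :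
    ∃ γ ∈ Γ, (N γ).Indep (insert e ↑(C γ)) ∧
      ∀ X ⊆ S, 0 ≤ radoSurplus N Γ (Function.update C γ (insert e (C γ))) X := by
  by_contra! hext
  have hS' : ∀ X ⊆ S, 0 ≤ radoSurplus N Γ C X :=
    fun X hX ↦ hS X (hX.trans (Finset.subset_insert e S))
  choose T hTS hT hTe using
    fun γ hγ ↦ exists_tight_rk_insert_eq hC hS' hγ (heC γ hγ) (hext γ hγ)
  set U := Γ.attach.biUnion fun γ ↦ T γ.1 γ.2
  have hUS : U ⊆ S := Finset.biUnion_subset.2 fun γ _ ↦ hTS γ.1 γ.2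
  have hU : radoSurplus N Γ C U = 0 :=
    radoSurplus_biUnion_eq_zero hC hS' (fun γ _ ↦ hTS γ.1 γ.2) fun γ _ ↦ hT γ.1 γ.2
  have hUe : ∀ γ ∈ Γ, (N γ).rk (insert e ↑(U ∪ C γ)) = (N γ).rk ↑(U ∪ C γ) := by
    refine fun γ hγ ↦ rk_insert_eq_of_subset (hTe γ hγ) ?_ (U ∪ C γ).finite_toSet
    exact Finset.coe_subset.2 (Finset.union_subset_union_left
      (Finset.subset_biUnion_of_mem (fun γ ↦ T γ.1 γ.2) (Finset.mem_attach Γ ⟨γ, hγ⟩)))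
  have := hS (insert e U) (Finset.insert_subset_insert e hUS)
  rw [radoSurplus_insert (fun h ↦ heS (hUS h)) hUe, hU] at this
  omega

lemma filter_update_union_update_insert [DecidableEq ι] (f : α → ι) (heS : e ∉ S) (γ δ : ι) :
    (insert e S).filter (Function.update f e γ · = δ) ∪ C δ =
      S.filter (f · = δ) ∪ Function.update C γ (insert e (C γ)) δ := by
  ext x
  by_cases hx : x = e <;> by_cases hδ : δ = γ <;>
    simp_all [Function.update_apply, eq_comm]

theorem exists_indep_coloring_of_radoSurplus_nonneg [DecidableEq ι] [Nonempty ι]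
    (S : Finset α) (C : ι → Finset α) (hC : ∀ γ ∈ Γ, (N γ).Indep ↑(C γ))
    (hCS : ∀ γ ∈ Γ, Disjoint (C γ) S) (hS : ∀ X ⊆ S, 0 ≤ radoSurplus N Γ C X) :
    ∃ f : α → ι, (∀ x ∈ S, f x ∈ Γ) ∧ ∀ γ ∈ Γ, (N γ).Indep ↑(S.filter (f · = γ) ∪ C γ) := by
  induction S using Finset.induction_on generalizing C with
  | empty => exact ⟨fun _ ↦ Classical.arbitrary ι, by simp, by simpa using hC⟩
  | insert e S heS ih =>
    have heC : ∀ γ ∈ Γ, e ∉ C γ :=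
      fun γ hγ heC ↦ Finset.disjoint_left.1 (hCS γ hγ) heC (Finset.mem_insert_self e S)
    obtain ⟨γ₀, hγ₀, hind, hS'⟩ := exists_color_radoSurplus_update_insert_nonneg hC heC heS hS
    set C' := Function.update C γ₀ (insert e (C γ₀))
    have hC' : ∀ γ ∈ Γ, (N γ).Indep ↑(C' γ) := by
      intro γ hγ
      obtain rfl | hne := eq_or_ne γ γ₀
      · simpa [C'] using hind
      · simpa [C', hne] using hC γ hγ
    have hCS' : ∀ γ ∈ Γ, Disjoint (C' γ) S := by
      intro γ hγ
      obtain rfl | hne := eq_or_ne γ γ₀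
      · simpa [C', heS] using (hCS γ hγ).mono_right (Finset.subset_insert e S)
      · simpa [C', hne] using (hCS γ hγ).mono_right (Finset.subset_insert e S)
    obtain ⟨f, hfΓ, hf⟩ := ih C' hC' hCS' hS'
    refine ⟨Function.update f e γ₀, ?_, fun γ hγ ↦ ?_⟩
    · simp only [Finset.mem_insert, forall_eq_or_imp, Function.update_self, hγ₀, true_and]
      intro x hx
      rw [Function.update_of_ne (ne_of_mem_of_not_mem hx heS)]
      exact hfΓ x hx
    · rw [filter_update_union_update_insert f heS]
      exact hf γ hγ

theorem exists_indep_coloring_of_card_le_sum_rk [DecidableEq ι] [Nonempty ι] (S : Finset α)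
    (hS : ∀ X ⊆ S, X.card ≤ ∑ γ ∈ Γ, (N γ).rk ↑X) :
    ∃ f : α → ι, (∀ x ∈ S, f x ∈ Γ) ∧ ∀ γ, (N γ).Indep ↑(S.filter (f · = γ)) := by
  obtain ⟨f, hfΓ, hf⟩ := exists_indep_coloring_of_radoSurplus_nonneg (N := N) S (fun _ ↦ ∅)
    (by simp) (by simp) fun X hX ↦ by
      simp only [radoSurplus, Finset.union_empty, Finset.card_empty, Nat.cast_zero, sub_zero,
        sub_nonneg]
      exact_mod_cast hS X hX
  refine ⟨f, hfΓ, fun γ ↦ ?_⟩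
  by_cases hγ : γ ∈ Γ
  · simpa using hf γ hγ
  · convert (N γ).empty_indep
    rw [Finset.coe_eq_empty, Finset.filter_eq_empty_iff]
    exact fun x hx hfx ↦ hγ (hfx ▸ hfΓ x hx)

end Rado

/-- Seymour's theorem: if a matroid on a finite ground set can be properly colored
with colors `{1, ..., k}` (i.e. the ground set partitions into `k` independent sets),
then it is colorable from any list assignment with all lists of size `k`. -/
theorem seymour_list_coloring {α : Type*} (M : Matroid α) (hfin : M.E.Finite)
    (k : ℕ) (L : α → Finset ℕ) (hL : ∀ e ∈ M.E, (L e).card = k)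
    (hcol : ∃ c : α → ℕ, (∀ e ∈ M.E, c e ∈ Finset.Icc 1 k) ∧
      ∀ i : ℕ, M.Indep {e ∈ M.E | c e = i}) :
    ∃ c : α → ℕ, (∀ e ∈ M.E, c e ∈ L e) ∧
      ∀ i : ℕ, M.Indep {e ∈ M.E | c e = i} := by
  classical
  obtain ⟨c, hc, hc_indep⟩ := hcol
  set S := hfin.toFinset
  have hSE : (S : Set α) = M.E := hfin.coe_toFinset
  have hkcol : ∀ Y ⊆ S, Y.card ≤ k * M.rk ↑Y := by
    intro Y hY
    have hYE : ∀ x ∈ Y, x ∈ M.E := fun x hx ↦ hSE ▸ hY hx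
    simpa using card_le_card_mul_rk c _ Y (fun x hx ↦ hc x (hYE x hx)) fun i _ ↦
      (hc_indep i).subset fun x hx ↦
        ⟨hYE x (Finset.mem_filter.1 hx).1, (Finset.mem_filter.1 hx).2⟩
  obtain ⟨f, -, hf⟩ := exists_indep_coloring_of_card_le_sum_rk
    (N := fun γ ↦ M ↾ {x | γ ∈ L x}) (Γ := S.biUnion L) S fun X hX ↦ by
      refine (card_le_sum_rk_filter_mem L (S.biUnion L) X
        (fun x hx ↦ Finset.subset_biUnion_of_mem L (hX hx))
        (fun x hx ↦ hL x (hSE ▸ hX hx)) fun Y hY ↦ hkcol Y (hY.trans hX)).trans_eq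
        (Finset.sum_congr rfl fun γ _ ↦ ?_)
      rw [rk_restrict, Finset.coe_filter]
      rfl
  have hclass : ∀ i, {e ∈ M.E | f e = i} = ↑(S.filter (f · = i)) := fun i ↦ by
    ext x
    simp [S]
  refine ⟨f, fun e he ↦ ?_, fun i ↦ hclass i ▸ (hf i).of_restrict⟩
  exact (hf (f e)).subset_ground (Finset.mem_filter.2 ⟨hfin.mem_toFinset.2 he, rfl⟩)
end

section
/- Let M be a matroid on a finite ground set E and ℓ : E → ℕ a function. If M is colorable from the lists L_ℓ(e) = {1, ..., ℓ(e)}, then M is colorable from every list assignment L with |L(e)| = ℓ(e) for all e ∈ E. -/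
/-!
Let `ρ_L(R) = ∑ᵢ r{e ∈ R | i ∈ L e}`. A Rado-type argument shows that `M` is colorable from `L`
as soon as `|R| ≤ ρ_L(R)` for all `R ⊆ E`: while some list `L e` has two colors `a ≠ b`, deleting
`a` or deleting `b` from it keeps this condition, since violators `R₁ ∋ e` and `R₂ ∋ e` of the two
shortened assignments would give, by submodularity applied color by color,
`ρ_L(R₁ ∪ R₂) + ρ_L((R₁ ∩ R₂) \ {e}) ≤ |R₁| + |R₂| - 2`, below the bound `|R₁| + |R₂| - 1`
given by the condition for `L`. Once all lists are singletons, the condition for a color class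
says that it is independent.

The coloring from the initial segments `{1, …, ℓ e}` splits `R` into independent sets
`R ∩ c⁻¹(j + 1) ⊆ {e ∈ R | j < ℓ e}`, so `|R| ≤ ∑ⱼ r{e ∈ R | j < ℓ e}`. These are the level sets
of the family `Fᵢ = {e ∈ R | i ∈ L e}`, whose covering numbers are `|L e| = ℓ e`, and by
submodularity the level sets of a family have rank sum at most `∑ᵢ r(Fᵢ) = ρ_L(R)`.
-/

open Finset

theorem Finset.sum_range_add_le_of_forall_add_le {β : Type*} [AddCommMonoid β] [PartialOrder β]
    [IsOrderedAddMonoid β] {a b c : ℕ → β} (h : ∀ j, a j + b (j + 1) ≤ c j + b j) (K : ℕ) :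
    ∑ j ∈ range K, a j + b K ≤ ∑ j ∈ range K, c j + b 0 := by
  induction K with
  | zero => simp
  | succ K ih =>
    calc ∑ j ∈ range (K + 1), a j + b (K + 1)
        = ∑ j ∈ range K, a j + (a K + b (K + 1)) := by rw [sum_range_succ, add_assoc]
      _ ≤ ∑ j ∈ range K, a j + (c K + b K) := add_le_add le_rfl (h K)
      _ = (∑ j ∈ range K, a j + b K) + c K := by abel
      _ ≤ (∑ j ∈ range K, c j + b 0) + c K := by gcongr
      _ = ∑ j ∈ range (K + 1), c j + b 0 := by rw [sum_range_succ]; abel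

theorem Function.update_erase_apply_subset {α κ : Type*} [DecidableEq α] [DecidableEq κ]
    (L : α → Finset κ) (e : α) (a : κ) (f : α) :
    Function.update L e ((L e).erase a) f ⊆ L f := by
  rcases eq_or_ne f e with rfl | hf
  · simpa using erase_subset a (L f)
  · simp [hf]

namespace Matroid

variable {α κ ι : Type*} {M : Matroid α}

def ListColorable (M : Matroid α) (L : α → Finset κ) : Prop :=
  ∃ c : α → κ, (∀ e ∈ M.E, c e ∈ L e) ∧ ∀ i, M.Indep {e ∈ M.E | c e = i}

theorem ListColorable.mono {L L' : α → Finset κ} (h : M.ListColorable L')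
    (hL : ∀ e ∈ M.E, L' e ⊆ L e) : M.ListColorable L :=
  let ⟨c, hc, hind⟩ := h
  ⟨c, fun e he ↦ hL e he (hc e he), hind⟩

theorem sum_eRk_setOf_lt_card_filter_le (M : Matroid α) (F : ι → Set α)
    [∀ e i, Decidable (e ∈ F i)] (s : Finset ι) (K : ℕ) :
    ∑ j ∈ range K, M.eRk {e | j < #{i ∈ s | e ∈ F i}} ≤ ∑ i ∈ s, M.eRk (F i) := by
  classical
  induction s using Finset.induction_on with
  | empty => simp
  | insert a s ha ih =>
    set N : ℕ → Set α := fun j ↦ {e | j < #{i ∈ s | e ∈ F i}}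
    set G : ℕ → Set α := fun j ↦ {e ∈ F a | j ≤ #{i ∈ s | e ∈ F i}}
    have hlevel : ∀ j, {e | j < #{i ∈ insert a s | e ∈ F i}} = N j ∪ G j := by
      intro j; ext e
      by_cases hea : e ∈ F a <;> simp [filter_insert, hea, ha, N, G]
      omega
    have hstep : ∀ j, M.eRk (N j ∪ G j) + M.eRk (G (j + 1)) ≤ M.eRk (N j) + M.eRk (G j) := by
      intro j
      have : N j ∩ G j = G (j + 1) := by
        ext e
        by_cases hea : e ∈ F a <;> simp [N, G, hea]
        omega
      rw [← this, add_comm]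
      exact M.eRk_submod _ _
    simp_rw [hlevel]
    calc ∑ j ∈ range K, M.eRk (N j ∪ G j)
        ≤ ∑ j ∈ range K, M.eRk (N j ∪ G j) + M.eRk (G K) := le_self_add
      _ ≤ ∑ j ∈ range K, M.eRk (N j) + M.eRk (G 0) :=
          sum_range_add_le_of_forall_add_le (a := fun j ↦ M.eRk (N j ∪ G j)) hstep K
      _ ≤ ∑ i ∈ s, M.eRk (F i) + M.eRk (F a) := by gcongr; simp [G]
      _ = ∑ i ∈ insert a s, M.eRk (F i) := by rw [sum_insert ha, add_comm]

section listRank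

variable [DecidableEq κ]

/-- `∑ᵢ r{e ∈ R | i ∈ L e}` over the colors `i` occurring in the lists of `R`; the condition
`M.ListHall L` is Rado's condition for an independent transversal of the sets
`{(e, i) | i ∈ L e}` in the direct sum of copies of `M`, one copy per color. -/
noncomputable def listRank (M : Matroid α) (L : α → Finset κ) (R : Finset α) : ℕ∞ :=
  ∑ i ∈ R.biUnion L, M.eRk {e ∈ (R : Set α) | i ∈ L e}

def ListHall (M : Matroid α) (L : α → Finset κ) : Prop :=
  ∀ R : Finset α, (R : Set α) ⊆ M.E → (#R : ℕ∞) ≤ M.listRank L R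

theorem listRank_eq_sum_of_subset {L : α → Finset κ} {R : Finset α} {S : Finset κ}
    (hS : R.biUnion L ⊆ S) :
    M.listRank L R = ∑ i ∈ S, M.eRk {e ∈ (R : Set α) | i ∈ L e} := by
  refine sum_subset hS fun i _ hi ↦ ?_
  have : {e ∈ (R : Set α) | i ∈ L e} = ∅ := by
    ext e
    simp only [mem_biUnion, not_exists, not_and] at hi
    simpa using hi e
  rw [this, eRk_empty]

theorem listRank_update_of_notMem [DecidableEq α] {L : α → Finset κ} {R : Finset α} {e : α}
    (he : e ∉ R) (X : Finset κ) : M.listRank (Function.update L e X) R = M.listRank L R := by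
  have h : ∀ f ∈ R, Function.update L e X f = L f := fun f hf ↦
    Function.update_of_ne (by rintro rfl; exact he hf) _ _
  unfold listRank
  rw [biUnion_congr rfl h]
  refine sum_congr rfl fun i _ ↦ ?_
  congr 1
  ext f
  simp +contextual [h]

theorem listRank_union_add_listRank_erase_inter_le [DecidableEq α] {L : α → Finset κ}
    {R₁ R₂ : Finset α} {e : α} {a b : κ} (hab : a ≠ b) (he₁ : e ∈ R₁) (he₂ : e ∈ R₂) :
    M.listRank L (R₁ ∪ R₂) + M.listRank L ((R₁ ∩ R₂).erase e) ≤
      M.listRank (Function.update L e ((L e).erase a)) R₁ +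
        M.listRank (Function.update L e ((L e).erase b)) R₂ := by
  set L₁ := Function.update L e ((L e).erase a)
  set L₂ := Function.update L e ((L e).erase b)
  set S := (R₁ ∪ R₂).biUnion L
  rw [listRank_eq_sum_of_subset (S := S) subset_rfl,
    listRank_eq_sum_of_subset (S := S) (biUnion_subset_biUnion_of_subset_left _
      ((erase_subset _ _).trans inter_subset_union)),
    listRank_eq_sum_of_subset (S := S)
      ((biUnion_mono fun f _ ↦ Function.update_erase_apply_subset L e a f).trans
        (biUnion_subset_biUnion_of_subset_left _ subset_union_left)),
    listRank_eq_sum_of_subset (S := S)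
      ((biUnion_mono fun f _ ↦ Function.update_erase_apply_subset L e b f).trans
        (biUnion_subset_biUnion_of_subset_left _ subset_union_right)),
    ← sum_add_distrib, ← sum_add_distrib]
  refine sum_le_sum fun i _ ↦ ?_
  set X := {f ∈ (R₁ : Set α) | i ∈ L₁ f}
  set Y := {f ∈ (R₂ : Set α) | i ∈ L₂ f}
  have hU : {f ∈ ((R₁ ∪ R₂ : Finset α) : Set α) | i ∈ L f} ⊆ X ∪ Y := by
    rintro f ⟨hf, hi⟩
    rcases eq_or_ne f e with rfl | hfe
    · rcases eq_or_ne i a with rfl | hia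
      · exact Or.inr ⟨he₂, by simp [L₂, hi, hab]⟩
      · exact Or.inl ⟨he₁, by simp [L₁, hi, hia]⟩
    · simpa [X, Y, L₁, L₂, hfe, hi] using hf
  have hI : {f ∈ (((R₁ ∩ R₂).erase e : Finset α) : Set α) | i ∈ L f} ⊆ X ∩ Y := by
    rintro f ⟨hf, hi⟩
    simp only [coe_erase, coe_inter, Set.mem_sdiff, Set.mem_inter_iff, mem_coe,
      Set.mem_singleton_iff] at hf
    simp [X, Y, L₁, L₂, hf.2, hi, hf.1.1, hf.1.2]
  calc _ ≤ M.eRk (X ∪ Y) + M.eRk (X ∩ Y) := add_le_add (M.eRk_mono hU) (M.eRk_mono hI)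
    _ ≤ M.eRk X + M.eRk Y := by rw [add_comm]; exact M.eRk_submod X Y

theorem ListHall.exists_listHall_update_erase [DecidableEq α] {L : α → Finset κ}
    (h : M.ListHall L) {e : α} (he : 1 < #(L e)) :
    ∃ a ∈ L e, M.ListHall (Function.update L e ((L e).erase a)) := by
  obtain ⟨a, ha, b, hb, hab⟩ := one_lt_card.1 he
  by_contra! hfail
  have hviolator : ∀ c ∈ L e, ∃ R : Finset α, (R : Set α) ⊆ M.E ∧ e ∈ R ∧
      M.listRank (Function.update L e ((L e).erase c)) R < #R := by
    intro c hc
    obtain ⟨R, hR, hlt⟩ : ∃ R : Finset α, (R : Set α) ⊆ M.E ∧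
        M.listRank (Function.update L e ((L e).erase c)) R < #R := by
      simpa [ListHall] using hfail c hc
    refine ⟨R, hR, by_contra fun heR ↦ ?_, hlt⟩
    rw [listRank_update_of_notMem heR] at hlt
    exact (h R hR).not_gt hlt
  obtain ⟨R₁, hR₁, he₁, hlt₁⟩ := hviolator a ha
  obtain ⟨R₂, hR₂, he₂, hlt₂⟩ := hviolator b hb
  have hU := h (R₁ ∪ R₂) (by simpa using Set.union_subset hR₁ hR₂)
  have hI := h ((R₁ ∩ R₂).erase e) fun f hf ↦
    hR₁ (mem_inter.1 (mem_of_mem_erase (s := R₁ ∩ R₂) hf)).1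
  have hsub := M.listRank_union_add_listRank_erase_inter_le (L := L) hab he₁ he₂
  have hcard : #(R₁ ∪ R₂) + #((R₁ ∩ R₂).erase e) + 1 = #R₁ + #R₂ := by
    rw [card_erase_of_mem (mem_inter.2 ⟨he₁, he₂⟩), ← card_union_add_card_inter]
    have : 0 < #(R₁ ∩ R₂) := card_pos.2 ⟨e, mem_inter.2 ⟨he₁, he₂⟩⟩
    omega
  generalize M.listRank (Function.update L e ((L e).erase a)) R₁ = ρ₁ at hlt₁ hsub
  generalize M.listRank (Function.update L e ((L e).erase b)) R₂ = ρ₂ at hlt₂ hsub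
  lift ρ₁ to ℕ using ne_top_of_lt hlt₁
  lift ρ₂ to ℕ using ne_top_of_lt hlt₂
  have : (#(R₁ ∪ R₂) + #((R₁ ∩ R₂).erase e) : ℕ∞) ≤ (ρ₁ + ρ₂ : ℕ) := by
    push_cast
    exact (add_le_add hU hI).trans hsub
  norm_cast at this hlt₁ hlt₂
  omega

theorem ListHall.listColorable_of_card_le_one [Nonempty κ] {L : α → Finset κ}
    (h : M.ListHall L) (hE : M.E.Finite) (hL : ∀ e ∈ M.E, #(L e) ≤ 1) :
    M.ListColorable L := by
  have hsingle : ∀ e ∈ M.E, ∃ i, L e = {i} := by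
    intro e he
    refine card_eq_one.1 (le_antisymm (hL e he) (one_le_card.2 (nonempty_iff_ne_empty.2 ?_)))
    intro hLe
    simpa [listRank, hLe] using h {e} (by simpa using he)
  choose! c hc using hsingle
  refine ⟨c, fun e he ↦ by simp [hc e he], fun i ↦ ?_⟩
  set X := {e ∈ M.E | c e = i}
  have hX : X.Finite := hE.subset (Set.sep_subset _ _)
  refine (M.isRkFinite_of_finite hX).indep_of_encard_le_eRk ?_
  have hS : hX.toFinset.biUnion L ⊆ {i} := by
    intro j
    simp +contextual [X, hc]
  calc X.encard = #hX.toFinset := hX.encard_eq_coe_toFinset_card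
    _ ≤ M.listRank L hX.toFinset := h _ (by rw [hX.coe_toFinset]; exact Set.sep_subset _ _)
    _ = M.eRk {e ∈ X | i ∈ L e} := by
      rw [listRank_eq_sum_of_subset hS, sum_singleton, hX.coe_toFinset]
    _ ≤ M.eRk X := M.eRk_mono (Set.sep_subset _ _)

theorem ListHall.listColorable [Nonempty κ] {L : α → Finset κ} (h : M.ListHall L)
    (hE : M.E.Finite) : M.ListColorable L := by
  classical
  induction hn : ∑ e ∈ hE.toFinset, #(L e) using Nat.strong_induction_on generalizing L with
  | _ n ih =>
  by_cases hL : ∀ e ∈ M.E, #(L e) ≤ 1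
  · exact h.listColorable_of_card_le_one hE hL
  obtain ⟨e, heE, he⟩ : ∃ e ∈ M.E, 1 < #(L e) := by simpa using hL
  obtain ⟨a, ha, h'⟩ := h.exists_listHall_update_erase he
  have hsub := Function.update_erase_apply_subset L e a
  refine (ih _ ?_ h' rfl).mono fun f _ ↦ hsub f
  rw [← hn]
  refine sum_lt_sum (fun f _ ↦ card_le_card (hsub f)) ⟨e, hE.mem_toFinset.2 heE, ?_⟩
  simpa using card_erase_lt_of_mem ha

theorem ListColorable.card_le_sum_eRk_setOf_lt {ℓ : α → ℕ}
    (hc : M.ListColorable fun e ↦ Icc 1 (ℓ e)) {R : Finset α} (hR : (R : Set α) ⊆ M.E) {K : ℕ} (hK : ∀ e ∈ R, ℓ e ≤ K) :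
    (#R : ℕ∞) ≤ ∑ j ∈ range K, M.eRk {e ∈ (R : Set α) | j < ℓ e} := by
  obtain ⟨c, hcl, hind⟩ := hc
  have hc' : ∀ e ∈ R, 1 ≤ c e ∧ c e ≤ ℓ e := fun e he ↦ mem_Icc.1 (hcl e (hR he))
  rw [card_eq_sum_card_fiberwise (f := fun e ↦ c e - 1) (t := range K) fun e he ↦ by
    have := hc' e he; have := hK e he; simp; omega]
  push_cast
  refine sum_le_sum fun j _ ↦ ?_
  rw [← Set.encard_coe_eq_coe_finsetCard]
  have hfiber : ∀ e ∈ R, c e - 1 = j → c e = j + 1 ∧ j < ℓ e := fun e he hj ↦ by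
    have := hc' e he; omega
  refine ((hind (j + 1)).subset fun e he ↦ ?_).encard_le_eRk_of_subset fun e he ↦ ?_ <;>
    simp only [coe_filter, Set.mem_ofPred_eq] at he
  · exact ⟨hR he.1, (hfiber e he.1 he.2).1⟩
  · exact ⟨he.1, (hfiber e he.1 he.2).2⟩

theorem ListColorable.listHall_of_card_eq {ℓ : α → ℕ}
    (hc : M.ListColorable fun e ↦ Icc 1 (ℓ e)) {L : α → Finset κ}
    (hL : ∀ e ∈ M.E, #(L e) = ℓ e) : M.ListHall L := by
  classical
  intro R hR
  set F : κ → Set α := fun i ↦ {e ∈ (R : Set α) | i ∈ L e}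
  have hcount : ∀ e ∈ R, #{i ∈ R.biUnion L | e ∈ F i} = ℓ e := by
    intro e he
    rw [← hL e (hR he)]
    congr 1
    ext i
    simp only [mem_filter, mem_biUnion, F, Set.mem_ofPred_eq, mem_coe]
    exact ⟨fun h ↦ h.2.2, fun h ↦ ⟨⟨e, he, h⟩, he, h⟩⟩
  have hlevel : ∀ j, {e ∈ (R : Set α) | j < ℓ e} = {e | j < #{i ∈ R.biUnion L | e ∈ F i}} := by
    intro j
    ext e
    by_cases he : e ∈ R
    · simp [hcount e he, he]
    · have : {i ∈ R.biUnion L | e ∈ F i} = ∅ := filter_false_of_mem fun i _ hi ↦ he hi.1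
      simp [this, he]
  calc (#R : ℕ∞) ≤ ∑ j ∈ range (R.sup ℓ), M.eRk {e ∈ (R : Set α) | j < ℓ e} :=
        hc.card_le_sum_eRk_setOf_lt hR fun e he ↦ le_sup he
    _ = ∑ j ∈ range (R.sup ℓ), M.eRk {e | j < #{i ∈ R.biUnion L | e ∈ F i}} := by
        simp_rw [hlevel]
    _ ≤ M.listRank L R := M.sum_eRk_setOf_lt_card_filter_le F _ _

end listRank

end Matroid

/-- If a matroid is colorable from the lists `L_ℓ(e) = {1, ..., ℓ(e)}`, then it is
colorable from every list assignment `L` with `|L(e)| = ℓ(e)` for all `e`. -/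
theorem list_coloring_of_initial_segment_coloring {α : Type*} (M : Matroid α)
    (hfin : M.E.Finite) (ℓ : α → ℕ)
    (hcol : ∃ c : α → ℕ, (∀ e ∈ M.E, c e ∈ Finset.Icc 1 (ℓ e)) ∧
      ∀ i : ℕ, M.Indep {e ∈ M.E | c e = i})
    (L : α → Finset ℕ) (hL : ∀ e ∈ M.E, (L e).card = ℓ e) :
    ∃ c : α → ℕ, (∀ e ∈ M.E, c e ∈ L e) ∧
      ∀ i : ℕ, M.Indep {e ∈ M.E | c e = i} :=
  (Matroid.ListColorable.listHall_of_card_eq hcol hL).listColorable hfin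
end

section
/- Let M be a matroid whose ground set E is partitioned into independent sets I_1, ..., I_k. Define ℓ(e) = i for e ∈ I_i. Then M is colorable from every list assignment L with |L(e)| = ℓ(e) for all e ∈ E. -/
/-!
For a matroid rank function `r`, lists `L` admit a colouring of `E` with independent colour
classes as soon as Rado's condition `#T ≤ ∑ c, r {e ∈ T | c ∈ L e}` holds for every `T ⊆ E`:
if some list has two colours `x ≠ y`, submodularity shows that deleting `x` or deleting `y` from
it preserves the condition (two violating sets would give a violation on their union or on their
intersection minus the element), so the lists can be shrunk to singletons.

Under the hypothesis of the theorem the elements whose lists have size `n` form an independent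
set, so `#T` is the sum of the ranks of these levels of `T`, and Rado's condition follows from
`∑ n, r (level n of T) ≤ ∑ c, r {e ∈ T | c ∈ L e}`. This is proved by induction on `#T`: a loop
is deleted, and contracting a non-loop `v` of the top level `t` lowers the left side by at most
`t` and the right side by at least `#(L v) ≥ t`.
-/

open Finset

section

variable {α κ : Type*}

section RankFn

variable [DecidableEq α]

structure IsRankFn (r : Finset α → ℕ) : Prop where
  map_empty : r ∅ = 0
  mono : Monotone r
  insert_le (X : Finset α) (e : α) : r (insert e X) ≤ r X + 1
  submodular (X Y : Finset α) : r (X ∪ Y) + r (X ∩ Y) ≤ r X + r Y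

/-- The rank function of the contraction by `v`; meaningful only when `r {v} = 1`. -/
def contractRk (r : Finset α → ℕ) (v : α) (X : Finset α) : ℕ := r (insert v X) - 1

namespace IsRankFn

variable [DecidableEq κ] {r : Finset α → ℕ} {v : α} {lvl : α → ℕ} {L : α → Finset κ}
  {C : Finset κ} {T : Finset α} {t : ℕ}

lemma singleton_le_one (hr : IsRankFn r) (v : α) : r {v} ≤ 1 := by
  simpa [hr.map_empty] using hr.insert_le ∅ v

lemma le_card (hr : IsRankFn r) (X : Finset α) : r X ≤ #X := by
  induction X using Finset.induction_on with
  | empty => simp [hr.map_empty]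
  | insert e X he ih => rw [card_insert_of_notMem he]; exact (hr.insert_le X e).trans (by omega)

lemma erase_eq_of_loop (hr : IsRankFn r) (hv : r {v} = 0) (S : Finset α) :
    r (S.erase v) = r S := by
  refine le_antisymm (hr.mono (erase_subset v S)) ?_
  have h := hr.submodular (S.erase v) {v}
  have hS : S ⊆ S.erase v ∪ {v} := fun e he => by
    rcases eq_or_ne e v with rfl | hne <;> simp_all
  have := hr.mono hS
  omega

lemma one_le_insert (hr : IsRankFn r) (hv : r {v} = 1) (X : Finset α) : 1 ≤ r (insert v X) :=
  hv ▸ hr.mono (singleton_subset_iff.2 (mem_insert_self v X))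

lemma contract (hr : IsRankFn r) (hv : r {v} = 1) : IsRankFn (contractRk r v) where
  map_empty := by simp [contractRk, hv]
  mono X Y hXY := Nat.sub_le_sub_right (hr.mono (insert_subset_insert v hXY)) 1
  insert_le X e := by
    have := hr.insert_le (insert v X) e
    have := hr.one_le_insert hv X
    simp only [contractRk, insert_comm v e]
    omega
  submodular X Y := by
    have h := hr.submodular (insert v X) (insert v Y)
    rw [← insert_union_distrib, ← insert_inter_distrib] at h
    have := hr.one_le_insert hv (X ∪ Y)
    have := hr.one_le_insert hv (X ∩ Y)
    have := hr.one_le_insert hv X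
    have := hr.one_le_insert hv Y
    simp only [contractRk]
    omega

lemma le_contractRk_erase_add_one (hr : IsRankFn r) (hv : r {v} = 1) (S : Finset α) :
    r S ≤ contractRk r v (S.erase v) + 1 := by
  have := hr.mono (insert_erase_subset v S)
  have := hr.one_le_insert hv (S.erase v)
  simp only [contractRk]
  omega

lemma contractRk_erase_add_one (hr : IsRankFn r) (hv : r {v} = 1) {S : Finset α} (hS : v ∈ S) :
    contractRk r v (S.erase v) + 1 = r S := by
  have := hr.one_le_insert hv (S.erase v)
  rw [contractRk, insert_erase hS] at *
  omega

lemma contractRk_erase_le (hr : IsRankFn r) (S : Finset α) : contractRk r v (S.erase v) ≤ r S := by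
  have := hr.insert_le (S.erase v) v
  have := hr.mono (erase_subset v S)
  simp only [contractRk]
  omega


lemma sum_levels_le_sum_colors_of_contract (hr : IsRankFn r) (hv : r {v} = 1) (hvT : v ∈ T)
    (hLv : L v ⊆ C) (ht : t ≤ #(L v))
    (h : ∑ i ∈ Icc 1 t, contractRk r v {e ∈ T.erase v | lvl e = i} ≤
      ∑ c ∈ C, contractRk r v {e ∈ T.erase v | c ∈ L e}) :
    ∑ i ∈ Icc 1 t, r {e ∈ T | lvl e = i} ≤ ∑ c ∈ C, r {e ∈ T | c ∈ L e} := by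
  simp only [filter_erase] at h
  have hpoint (c : κ) : contractRk r v ({e ∈ T | c ∈ L e}.erase v) + (if c ∈ L v then 1 else 0)
      ≤ r {e ∈ T | c ∈ L e} := by
    split_ifs with hc
    · exact (hr.contractRk_erase_add_one hv (mem_filter.2 ⟨hvT, hc⟩)).le
    · simpa using hr.contractRk_erase_le _
  calc ∑ i ∈ Icc 1 t, r {e ∈ T | lvl e = i}
      ≤ ∑ i ∈ Icc 1 t, (contractRk r v ({e ∈ T | lvl e = i}.erase v) + 1) :=
        sum_le_sum fun i _ => hr.le_contractRk_erase_add_one hv _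
    _ = ∑ i ∈ Icc 1 t, contractRk r v ({e ∈ T | lvl e = i}.erase v) + t := by
        simp [sum_add_distrib]
    _ ≤ ∑ c ∈ C, contractRk r v ({e ∈ T | c ∈ L e}.erase v) + #(L v) := by gcongr
    _ = ∑ c ∈ C, (contractRk r v ({e ∈ T | c ∈ L e}.erase v) + if c ∈ L v then 1 else 0) := by
        rw [sum_add_distrib, sum_boole, filter_mem_eq_inter, inter_eq_right.2 hLv, Nat.cast_id]
    _ ≤ ∑ c ∈ C, r {e ∈ T | c ∈ L e} := sum_le_sum fun c _ => hpoint c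

theorem sum_levels_le_sum_colors (hr : IsRankFn r) (hC : ∀ e ∈ T, L e ⊆ C)
    (hlvl : ∀ e ∈ T, lvl e ≤ t ∧ lvl e ≤ #(L e)) :
    ∑ i ∈ Icc 1 t, r {e ∈ T | lvl e = i} ≤ ∑ c ∈ C, r {e ∈ T | c ∈ L e} := by
  induction T using Finset.strongInduction generalizing r t with
  | H T ih =>
  induction t with
  | zero => simp
  | succ t iht =>
    by_cases htop : ∃ v ∈ T, lvl v = t + 1
    · obtain ⟨v, hvT, hv⟩ := htop
      have hsub := erase_ssubset hvT
      have hC' : ∀ e ∈ T.erase v, L e ⊆ C := fun e he => hC e (mem_of_mem_erase he)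
      have hlvl' : ∀ e ∈ T.erase v, lvl e ≤ t + 1 ∧ lvl e ≤ #(L e) :=
        fun e he => hlvl e (mem_of_mem_erase he)
      rcases Nat.le_one_iff_eq_zero_or_eq_one.1 (hr.singleton_le_one v) with hloop | hnonloop
      · have h := ih _ hsub hr hC' hlvl'
        simpa only [filter_erase, hr.erase_eq_of_loop hloop] using h
      · exact hr.sum_levels_le_sum_colors_of_contract hnonloop hvT (hC v hvT)
          (hv ▸ (hlvl v hvT).2) (ih _ hsub (hr.contract hnonloop) hC' hlvl')
    · push Not at htop
      rw [sum_Icc_succ_top (by omega), filter_false_of_mem (fun e he => htop e he), hr.map_empty,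
        add_zero]
      exact iht fun e he => ⟨by have := hlvl e he; have := htop e he; omega, (hlvl e he).2⟩

end IsRankFn

def RadoCondition [DecidableEq κ] (r : Finset α → ℕ) (L : α → Finset κ) (C : Finset κ)
    (E : Finset α) : Prop :=
  ∀ T ⊆ E, #T ≤ ∑ c ∈ C, r {e ∈ T | c ∈ L e}

section ListUpdate

variable [DecidableEq κ] {L : α → Finset κ} {e₀ : α} {T T₁ T₂ : Finset α} {c : κ}

lemma filter_mem_update_of_notMem (he₀ : e₀ ∉ T) (A : Finset κ) :
    {e ∈ T | c ∈ Function.update L e₀ A e} = {e ∈ T | c ∈ L e} :=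
  filter_congr fun e he => by rw [Function.update_of_ne (ne_of_mem_of_not_mem he he₀)]

lemma update_erase_subset (z : κ) (e : α) :
    Function.update L e₀ ((L e₀).erase z) e ⊆ L e := by
  rcases eq_or_ne e e₀ with rfl | hne
  · simpa using erase_subset z (L e)
  · simp [Function.update_of_ne hne]

lemma filter_union_subset_update_erase {x y : κ} (hxy : x ≠ y) (h₁ : e₀ ∈ T₁)
    (h₂ : e₀ ∈ T₂) :
    {e ∈ T₁ ∪ T₂ | c ∈ L e} ⊆ {e ∈ T₁ | c ∈ Function.update L e₀ ((L e₀).erase x) e} ∪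
      {e ∈ T₂ | c ∈ Function.update L e₀ ((L e₀).erase y) e} := by
  intro e he
  simp only [mem_filter, mem_union, Function.update_apply] at he ⊢
  split_ifs with h
  · subst h; rcases eq_or_ne c x with rfl | hcx <;> simp_all
  · tauto

lemma filter_inter_erase_subset_update (A B : Finset κ) :
    {e ∈ (T₁ ∩ T₂).erase e₀ | c ∈ L e} ⊆ {e ∈ T₁ | c ∈ Function.update L e₀ A e} ∩
      {e ∈ T₂ | c ∈ Function.update L e₀ B e} := by
  intro e he
  simp only [mem_filter, mem_inter, mem_erase] at he ⊢
  simp_all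

end ListUpdate

namespace RadoCondition

variable [DecidableEq κ] {r : Finset α → ℕ} {L : α → Finset κ} {C : Finset κ} {E : Finset α}

lemma nonempty (hr : IsRankFn r) (h : RadoCondition r L C E) {e : α} (he : e ∈ E) :
    (L e).Nonempty := by
  rw [nonempty_iff_ne_empty]
  intro hne
  have := h {e} (singleton_subset_iff.2 he)
  simp [filter_singleton, hne, hr.map_empty] at this

lemma exists_coloring_of_card_le_one [Nonempty κ] (hr : IsRankFn r) (h : RadoCondition r L C E)
    (h₁ : ∀ e ∈ E, #(L e) ≤ 1) :
    ∃ col : α → κ, (∀ e ∈ E, col e ∈ L e) ∧ ∀ c, r {e ∈ E | col e = c} = #{e ∈ E | col e = c} := by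
  have hsingle (e) (he : e ∈ E) : ∃ c, L e = {c} :=
    card_eq_one.1 (le_antisymm (h₁ e he) (h.nonempty hr he).card_pos)
  choose! col hcol using hsingle
  refine ⟨col, fun e he => hcol e he ▸ mem_singleton_self _, fun c => le_antisymm (hr.le_card _) ?_⟩
  set T := {e ∈ E | col e = c}
  have hclass (c' : κ) : r {e ∈ T | c' ∈ L e} = if c' = c then r T else 0 := by
    split_ifs with hc
    · rw [filter_true_of_mem fun e he => ?_]
      obtain ⟨he', rfl⟩ := mem_filter.1 he
      rw [hc, hcol e he']; exact mem_singleton_self _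
    · rw [filter_false_of_mem fun e he => ?_, hr.map_empty]
      obtain ⟨he', rfl⟩ := mem_filter.1 he
      rw [hcol e he', mem_singleton]; exact hc
  calc #T ≤ ∑ c' ∈ C, r {e ∈ T | c' ∈ L e} := h T (filter_subset _ _)
    _ ≤ r T := by simp only [hclass, sum_ite_eq']; split_ifs <;> simp

lemma mem_of_update_violation (h : RadoCondition r L C E) {e₀ : α} {A : Finset κ} {T : Finset α}
    (hT : T ⊆ E) (hlt : ∑ c ∈ C, r {e ∈ T | c ∈ Function.update L e₀ A e} < #T) : e₀ ∈ T := by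
  by_contra he₀
  simp only [filter_mem_update_of_notMem he₀] at hlt
  exact (h T hT).not_gt hlt

lemma update_erase_or (hr : IsRankFn r) (h : RadoCondition r L C E) {e₀ : α} {x y : κ}
    (hxy : x ≠ y) :
    RadoCondition r (Function.update L e₀ ((L e₀).erase x)) C E ∨
      RadoCondition r (Function.update L e₀ ((L e₀).erase y)) C E := by
  by_contra! hcon
  simp only [RadoCondition, not_forall, not_le, exists_prop] at hcon
  obtain ⟨⟨T₁, hT₁, hlt₁⟩, ⟨T₂, hT₂, hlt₂⟩⟩ := hcon
  have h₁ := h.mem_of_update_violation hT₁ hlt₁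
  have h₂ := h.mem_of_update_violation hT₂ hlt₂
  have hsub : ∀ c ∈ C, r {e ∈ T₁ ∪ T₂ | c ∈ L e} + r {e ∈ (T₁ ∩ T₂).erase e₀ | c ∈ L e} ≤
      r {e ∈ T₁ | c ∈ Function.update L e₀ ((L e₀).erase x) e} +
        r {e ∈ T₂ | c ∈ Function.update L e₀ ((L e₀).erase y) e} := fun c _ =>
    (add_le_add (hr.mono (filter_union_subset_update_erase hxy h₁ h₂))
      (hr.mono (filter_inter_erase_subset_update _ _))).trans (hr.submodular _ _)
  have hU := h _ (union_subset hT₁ hT₂)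
  have hV := h ((T₁ ∩ T₂).erase e₀) ((erase_subset _ _).trans (inter_subset_left.trans hT₁))
  have hcard := card_union_add_card_inter T₁ T₂
  have hcard' := card_erase_of_mem (mem_inter.2 ⟨h₁, h₂⟩)
  have hpos := card_pos.2 ⟨e₀, mem_inter.2 ⟨h₁, h₂⟩⟩
  have := sum_le_sum hsub
  rw [sum_add_distrib, sum_add_distrib] at this
  omega

theorem exists_coloring [Nonempty κ] (hr : IsRankFn r) (h : RadoCondition r L C E) :
    ∃ col : α → κ, (∀ e ∈ E, col e ∈ L e) ∧ ∀ c, r {e ∈ E | col e = c} = #{e ∈ E | col e = c} := by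
  induction hn : ∑ e ∈ E, #(L e) using Nat.strong_induction_on generalizing L with
  | _ n ih =>
  by_cases h₁ : ∀ e ∈ E, #(L e) ≤ 1
  · exact h.exists_coloring_of_card_le_one hr h₁
  push Not at h₁
  obtain ⟨e₀, he₀, hcard⟩ := h₁
  obtain ⟨x, hx, y, hy, hxy⟩ := one_lt_card.1 hcard
  obtain ⟨z, hz, h'⟩ : ∃ z ∈ L e₀, RadoCondition r (Function.update L e₀ ((L e₀).erase z)) C E := by
    rcases h.update_erase_or hr hxy with h' | h'
    exacts [⟨x, hx, h'⟩, ⟨y, hy, h'⟩]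
  have hlt : ∑ e ∈ E, #(Function.update L e₀ ((L e₀).erase z) e) < n :=
    hn ▸ sum_lt_sum (fun e _ => card_le_card (update_erase_subset z e))
      ⟨e₀, he₀, by simpa using card_erase_lt_of_mem hz⟩
  obtain ⟨col, hcol, hclass⟩ := ih _ hlt h' rfl
  exact ⟨col, fun e he => update_erase_subset z e (hcol e he), hclass⟩

end RadoCondition

end RankFn

namespace Matroid

variable {M : Matroid α} {X : Finset α}

noncomputable def finsetRk (M : Matroid α) (X : Finset α) : ℕ := (M.eRk X).toNat

lemma cast_finsetRk : (M.finsetRk X : ℕ∞) = M.eRk X :=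
  ENat.natCast_toNat ((M.eRk_le_encard X).trans_lt X.finite_toSet.encard_lt_top).ne

lemma isRankFn_finsetRk [DecidableEq α] (M : Matroid α) : IsRankFn M.finsetRk where
  map_empty := by simp [finsetRk]
  mono X Y h := by
    have := M.eRk_mono (coe_subset.2 h)
    rwa [← cast_finsetRk, ← cast_finsetRk, Nat.cast_le] at this
  insert_le X e := by
    have := M.eRk_insert_le_add_one e X
    rwa [← coe_insert, ← cast_finsetRk, ← cast_finsetRk, ← Nat.cast_one, ← Nat.cast_add,
      Nat.cast_le] at this
  submodular X Y := by
    have := M.eRk_inter_add_eRk_union_le X Y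
    rw [← coe_inter, ← coe_union] at this
    simp only [← cast_finsetRk, ← Nat.cast_add, Nat.cast_le] at this
    omega

lemma indep_iff_finsetRk_eq_card : M.Indep X ↔ M.finsetRk X = #X := by
  rw [indep_iff_eRk_eq_encard_of_finite X.finite_toSet, ← cast_finsetRk,
    Set.encard_coe_eq_coe_finsetCard, Nat.cast_inj]

theorem exists_listColoring_of_indep_cardFibers [DecidableEq α] [DecidableEq κ] [Nonempty κ]
    (M : Matroid α) (E : Finset α) (L : α → Finset κ) (hne : ∀ e ∈ E, (L e).Nonempty)
    (hfib : ∀ n, M.Indep ↑{e ∈ E | #(L e) = n}) :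
    ∃ col : α → κ, (∀ e ∈ E, col e ∈ L e) ∧ ∀ c, M.Indep ↑{e ∈ E | col e = c} := by
  set t := E.sup fun e => #(L e)
  have hle_t (e : α) (he : e ∈ E) : #(L e) ≤ t := le_sup (f := fun e => #(L e)) he
  have hrado : RadoCondition M.finsetRk L (E.biUnion L) E := by
    intro T hT
    have hfibT (n : ℕ) : M.finsetRk {e ∈ T | #(L e) = n} = #{e ∈ T | #(L e) = n} :=
      indep_iff_finsetRk_eq_card.1 ((hfib n).subset (coe_subset.2 (filter_subset_filter _ hT)))
    calc #T = ∑ n ∈ Icc 1 t, #{e ∈ T | #(L e) = n} :=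
          card_eq_sum_card_fiberwise fun e he =>
            mem_Icc.2 ⟨(hne e (hT he)).card_pos, hle_t e (hT he)⟩
      _ = ∑ n ∈ Icc 1 t, M.finsetRk {e ∈ T | #(L e) = n} := by simp only [hfibT]
      _ ≤ ∑ c ∈ E.biUnion L, M.finsetRk {e ∈ T | c ∈ L e} :=
          M.isRankFn_finsetRk.sum_levels_le_sum_colors
            (fun e he => subset_biUnion_of_mem L (hT he)) fun e he => ⟨hle_t e (hT he), le_rfl⟩
  obtain ⟨col, hcol, hclass⟩ := hrado.exists_coloring M.isRankFn_finsetRk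
  exact ⟨col, hcol, fun c => indep_iff_finsetRk_eq_card.2 (hclass c)⟩

end Matroid

end

theorem list_coloring_from_partition_general {α : Type*} (M : Matroid α) (hfin : M.E.Finite)
    (k : ℕ) (I : Fin k → Set α)
    (hind : ∀ i, M.Indep (I i))
    (hunion : (⋃ i, I i) = M.E)
    (L : α → Finset ℕ)
    (hL : ∀ i : Fin k, ∀ e ∈ I i, (L e).card = (i : ℕ) + 1) :
    ∃ c : α → ℕ, (∀ e ∈ M.E, c e ∈ L e) ∧
      ∀ i : ℕ, M.Indep {e ∈ M.E | c e = i} := by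
  classical
  set E := hfin.toFinset
  have hlevel (e : α) (he : e ∈ E) : ∃ i : Fin k, e ∈ I i ∧ #(L e) = i + 1 := by
    obtain ⟨i, hi⟩ := Set.mem_iUnion.1 (hunion ▸ hfin.mem_toFinset.1 he)
    exact ⟨i, hi, hL i e hi⟩
  have hfib (n : ℕ) : M.Indep ↑{e ∈ E | #(L e) = n} := by
    rcases {e ∈ E | #(L e) = n}.eq_empty_or_nonempty with hempty | ⟨e₀, he₀⟩
    · simp [hempty, M.empty_indep]
    obtain ⟨he₀E, he₀n⟩ := mem_filter.1 he₀
    obtain ⟨i, -, hi⟩ := hlevel e₀ he₀E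
    refine (hind i).subset fun e he => ?_
    obtain ⟨heE, hen⟩ := mem_filter.1 he
    obtain ⟨j, hj, hjn⟩ := hlevel e heE
    rwa [Fin.ext (by omega : (j : ℕ) = i)] at hj
  obtain ⟨col, hcol, hclass⟩ := M.exists_listColoring_of_indep_cardFibers E L
    (fun e he => by obtain ⟨i, -, hi⟩ := hlevel e he; exact card_pos.1 (by omega)) hfib
  refine ⟨col, fun e he => hcol e (hfin.mem_toFinset.2 he), fun c => ?_⟩
  convert hclass c using 1
  ext e
  simp [E]

/-- If the ground set of a matroid is partitioned into independent sets
`I_1, ..., I_k`, and `ℓ(e) = i` for `e ∈ I_i`, then the matroid is colorable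
from every list assignment with `|L(e)| = ℓ(e)`. -/
theorem list_coloring_from_partition {α : Type*} (M : Matroid α) (hfin : M.E.Finite)
    (k : ℕ) (I : Fin k → Set α)
    (hind : ∀ i, M.Indep (I i))
    (hdisj : ∀ i j, i ≠ j → Disjoint (I i) (I j))
    (hunion : (⋃ i, I i) = M.E)
    (L : α → Finset ℕ)
    (hL : ∀ i : Fin k, ∀ e ∈ I i, (L e).card = (i : ℕ) + 1) :
    ∃ c : α → ℕ, (∀ e ∈ M.E, c e ∈ L e) ∧
      ∀ i : ℕ, M.Indep {e ∈ M.E | c e = i} :=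
  list_coloring_from_partition_general M hfin k I hind hunion L hL
end

section
/- Let A and B be bases of a matroid M, and let B = B_1 ⊔ ... ⊔ B_k be a partition of B. Then there exists a partition A = A_1 ⊔ ... ⊔ A_k such that (B \ B_i) ∪ A_i is a basis of M for every 1 ≤ i ≤ k. -/
/-!
The part `A_i` must be a base of `M_i := M ／ (B \ B_i)`, a matroid of rank `|B_i|`. By Edmonds'
matroid partition theorem, `A` splits into sets `A_i` independent in `M_i` as soon as
`|S| ≤ ∑ i, r_{M_i}(S)` for every `S ⊆ A`. Since `B` is independent, submodularity of `r` gives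
`r_{M ／ (C₁ ∪ C₂)} + r_{M ／ (C₁ ∩ C₂)} ≤ r_{M ／ C₁} + r_{M ／ C₂}` for `C₁ ∪ C₂ ⊆ B`; chaining this
over the sets `B \ B_i` bounds `r(S) = |S|` by `∑ i, r_{M_i}(S)`, and `M ／ B` has rank zero.
Finally `∑ |A_i| = |A| = |B| = ∑ r(M_i)` forces every `A_i` to be a base of `M_i`.

The partition theorem is proved by induction on `|A|`, as in Halmos–Vaughan's proof of Hall's
theorem: if some nonempty proper `S ⊆ A` is tight (`|S| = ∑ i, r_{M_i}(S)`), partition `S`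
first and contract its parts; otherwise put a single element into a matroid in which it is a
nonloop, and contract it there.
-/

open Set Function Matroid

lemma ENat.eq_of_forall_le_of_sum_le {ι : Type*} [Fintype ι] {f g : ι → ℕ∞}
    (hfg : ∀ i, f i ≤ g i) (hgf : ∑ i, g i ≤ ∑ i, f i) (hf : ∑ i, f i ≠ ⊤) (i : ι) :
    f i = g i := by
  classical
  have hi := Finset.mem_univ i
  rw [← Finset.add_sum_erase _ g hi, ← Finset.add_sum_erase _ f hi] at hgf
  rw [← Finset.add_sum_erase _ f hi] at hf
  have hrest : ∑ j ∈ Finset.univ.erase i, f j ≤ ∑ j ∈ Finset.univ.erase i, g j :=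
    Finset.sum_le_sum fun j _ ↦ hfg j
  refine (hfg i).antisymm ?_
  rw [← ENat.add_le_add_iff_right (WithTop.add_ne_top.1 hf).2]
  exact (add_le_add_right hrest _).trans hgf

namespace Matroid

variable {α : Type*} {M : Matroid α} {B C₁ C₂ X : Set α}

lemma eRk_contract_add_eRk (M : Matroid α) (C X : Set α) :
    (M ／ C).eRk X + M.eRk C = M.eRk (X ∪ C) := by
  obtain ⟨J, hJ⟩ := M.exists_isBasis' C
  obtain ⟨I, hI, hJI⟩ := hJ.indep.subset_isBasis'_of_subset (hJ.subset.trans subset_union_right)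
  have hIC : I ∩ C = J :=
    (hJ.eq_of_subset_indep (hI.indep.inter_right C) (subset_inter hJI hJ.subset)
      inter_subset_right).symm
  have hcon : (M ／ C).IsBasis' (I \ C) ((X ∪ C) \ C) :=
    hI.contract_isBasis' hJ (hI.indep.subset (union_subset sdiff_subset hJI))
  have hX : (M ／ C).eRk ((X ∪ C) \ C) = (M ／ C).eRk X := by
    rw [← eRk_inter_ground, ← eRk_inter_ground _ X, contract_ground]
    congr 1
    tauto_set
  rw [← hX, hcon.eRk_eq_encard, hJ.eRk_eq_encard, hI.eRk_eq_encard, ← hIC,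
    encard_sdiff_add_encard_inter]

section Partition

variable {ι : Type*}

structure IsIndepPartition (N : ι → Matroid α) (A : Set α) (I : ι → Set α) : Prop where
  pairwise_disjoint : Pairwise (Disjoint on I)
  iUnion_eq : ⋃ i, I i = A
  indep : ∀ i, (N i).Indep (I i)

variable {N : ι → Matroid α} {A S T : Set α} {I J K : ι → Set α} {a : α}

namespace IsIndepPartition

lemma empty (N : ι → Matroid α) : IsIndepPartition N ∅ (fun _ ↦ ∅) :=
  ⟨fun _ _ _ ↦ disjoint_empty _, iUnion_empty, fun i ↦ (N i).empty_indep⟩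

lemma singleton [DecidableEq ι] {i : ι} (ha : (N i).IsNonloop a) :
    IsIndepPartition N {a} (fun j ↦ if j = i then {a} else ∅) where
  pairwise_disjoint j l hjl := by
    by_cases hj : j = i
    · simp [onFun, hj, Ne.symm (hj ▸ hjl)]
    · simp [onFun, hj]
  iUnion_eq := by ext; simp
  indep j := by
    split_ifs with hj
    · exact hj ▸ ha.indep
    · exact (N j).empty_indep

lemma subset (h : IsIndepPartition N A I) (i : ι) : I i ⊆ A :=
  h.iUnion_eq ▸ subset_iUnion I i

lemma union (hJ : IsIndepPartition N S J) (hK : IsIndepPartition (fun i ↦ N i ／ J i) T K)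
    (hST : Disjoint S T) : IsIndepPartition N (S ∪ T) (fun i ↦ J i ∪ K i) where
  pairwise_disjoint i j hij :=
    disjoint_union_left.2 ⟨disjoint_union_right.2 ⟨hJ.pairwise_disjoint hij,
      hST.mono (hJ.subset i) (hK.subset j)⟩, disjoint_union_right.2
      ⟨hST.symm.mono (hK.subset i) (hJ.subset j), hK.pairwise_disjoint hij⟩⟩
  iUnion_eq := by rw [iUnion_union_distrib, hJ.iUnion_eq, hK.iUnion_eq]
  indep i := union_comm (J i) (K i) ▸ ((hJ.indep i).contract_indep_iff.1 (hK.indep i)).2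

variable [Fintype ι]

lemma encard_eq_sum (h : IsIndepPartition N A I) : A.encard = ∑ i, (I i).encard := by
  rw [← h.iUnion_eq, encard_iUnion_of_finite h.pairwise_disjoint, finsum_eq_sum_of_fintype]

lemma isBasis'_of_sum_eRk_le (h : IsIndepPartition N A I) (hA : A.Finite)
    (hsum : ∑ i, (N i).eRk A ≤ A.encard) (i : ι) : (N i).IsBasis' (I i) A := by
  have hle : ∀ j, (I j).encard ≤ (N j).eRk A :=
    fun j ↦ (h.indep j).encard_le_eRk_of_subset (h.subset j)
  have heq := ENat.eq_of_forall_le_of_sum_le hle (h.encard_eq_sum ▸ hsum)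
    (h.encard_eq_sum ▸ hA.encard_lt_top.ne) i
  exact (h.indep i).isBasis'_of_eRk_ge (hA.subset (h.subset i)) (h.subset i)
    (by rw [(h.indep i).eRk_eq_encard, heq])

lemma encard_le_sum_eRk_contract (hJ : IsIndepPartition N S J) (hS : S.Finite)
    (h : T.encard + S.encard ≤ ∑ i, (N i).eRk (T ∪ J i)) :
    T.encard ≤ ∑ i, (N i ／ J i).eRk T := by
  rw [← ENat.add_le_add_iff_right hS.encard_lt_top.ne]
  calc T.encard + S.encard ≤ ∑ i, (N i).eRk (T ∪ J i) := h
    _ = ∑ i, (N i ／ J i).eRk T + S.encard := by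
      rw [hJ.encard_eq_sum, ← Finset.sum_add_distrib]
      exact Finset.sum_congr rfl fun i _ ↦ by
        rw [← (hJ.indep i).eRk_eq_encard, eRk_contract_add_eRk]

end IsIndepPartition

variable [Fintype ι]

lemma forall_encard_le_sum_eRk_contract_of_tight (h : ∀ S ⊆ A, S.encard ≤ ∑ i, (N i).eRk S)
    (hA : A.Finite) (hSA : S ⊆ A) (htight : ∑ i, (N i).eRk S ≤ S.encard)
    (hJ : IsIndepPartition N S J) : ∀ T ⊆ A \ S, T.encard ≤ ∑ i, (N i ／ J i).eRk T := by
  intro T hT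
  refine hJ.encard_le_sum_eRk_contract (hA.subset hSA) ?_
  calc T.encard + S.encard = (T ∪ S).encard := (encard_union_eq (subset_sdiff.1 hT).2).symm
    _ ≤ ∑ i, (N i).eRk (T ∪ S) := h _ (union_subset (hT.trans sdiff_subset) hSA)
    _ = ∑ i, (N i).eRk (T ∪ J i) := Finset.sum_congr rfl fun i _ ↦ by
      rw [union_comm T S,
        ← (hJ.isBasis'_of_sum_eRk_le (hA.subset hSA) htight i).eRk_eq_eRk_union, union_comm]

lemma exists_forall_encard_le_sum_eRk_contract_of_lt
    (h : ∀ S ⊆ A, S.encard ≤ ∑ i, (N i).eRk S)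
    (hlt : ∀ S ⊆ A, S.Nonempty → S ≠ A → S.encard < ∑ i, (N i).eRk S) (ha : a ∈ A) :
    ∃ J, IsIndepPartition N {a} J ∧ ∀ T ⊆ A \ {a}, T.encard ≤ ∑ i, (N i ／ J i).eRk T := by
  classical
  obtain ⟨i, -, hi⟩ := Finset.exists_ne_zero_of_sum_ne_zero
    (one_pos.trans_le (by simpa using h {a} (singleton_subset_iff.2 ha))).ne'
  have hJ := IsIndepPartition.singleton (N := N) (eRk_singleton_eq_one_iff.1
    (((N i).eRk_singleton_le a).antisymm (Order.one_le_iff_ne_zero.2 hi)))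
  refine ⟨_, hJ, fun T hT ↦ ?_⟩
  obtain rfl | hTne := T.eq_empty_or_nonempty
  · simp
  refine hJ.encard_le_sum_eRk_contract (finite_singleton a) ?_
  calc T.encard + ({a} : Set α).encard = T.encard + 1 := by rw [encard_singleton]
    _ ≤ ∑ i, (N i).eRk T := Order.add_one_le_of_lt <| hlt T (hT.trans sdiff_subset) hTne
      fun hTA ↦ (subset_sdiff.1 hT).2.notMem_of_mem_left (hTA ▸ ha) rfl
    _ ≤ _ := Finset.sum_le_sum fun j _ ↦ (N j).eRk_mono subset_union_left

theorem exists_isIndepPartition_of_forall_encard_le_sum_eRk (hA : A.Finite)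
    (h : ∀ S ⊆ A, S.encard ≤ ∑ i, (N i).eRk S) : ∃ I, IsIndepPartition N A I := by
  induction hn : A.ncard using Nat.strong_induction_on generalizing A N with
  | _ n ih =>
  obtain rfl | ⟨a, ha⟩ := A.eq_empty_or_nonempty
  · exact ⟨_, .empty N⟩
  suffices ∃ S J, S.Nonempty ∧ S ⊆ A ∧ IsIndepPartition N S J ∧
      ∀ T ⊆ A \ S, T.encard ≤ ∑ i, (N i ／ J i).eRk T by
    obtain ⟨S, J, hSne, hSA, hJ, hrest⟩ := this
    obtain ⟨K, hK⟩ := ih _ (hn ▸ ncard_lt_ncard (hSA.sdiff_ssubset_of_nonempty hSne) hA)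
      hA.sdiff hrest rfl
    exact ⟨_, union_sdiff_cancel hSA ▸ hJ.union hK disjoint_sdiff_right⟩
  by_cases htight : ∃ S ⊆ A, S.Nonempty ∧ S ≠ A ∧ ∑ i, (N i).eRk S ≤ S.encard
  · obtain ⟨S, hSA, hSne, hSA', htight⟩ := htight
    obtain ⟨J, hJ⟩ := ih _ (hn ▸ ncard_lt_ncard (hSA.ssubset_of_ne hSA') hA) (hA.subset hSA)
      (fun T hT ↦ h T (hT.trans hSA)) rfl
    exact ⟨S, J, hSne, hSA, hJ, forall_encard_le_sum_eRk_contract_of_tight h hA hSA htight hJ⟩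
  · push Not at htight
    obtain ⟨J, hJ, hrest⟩ := exists_forall_encard_le_sum_eRk_contract_of_lt h htight ha
    exact ⟨{a}, J, singleton_nonempty a, singleton_subset_iff.2 ha, hJ, hrest⟩

end Partition

lemma eRk_contract_union_add_eRk_contract_inter_le (hI : M.Indep (C₁ ∪ C₂))
    (hfin : (C₁ ∪ C₂).Finite) (X : Set α) :
    (M ／ (C₁ ∪ C₂)).eRk X + (M ／ (C₁ ∩ C₂)).eRk X ≤ (M ／ C₁).eRk X + (M ／ C₂).eRk X := by
  have hsubmod := M.eRk_inter_add_eRk_union_le (X ∪ C₁) (X ∪ C₂)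
  rw [← union_inter_distrib_left, ← union_union_distrib_left, add_comm] at hsubmod
  rw [← eRk_contract_add_eRk M C₁, ← eRk_contract_add_eRk M C₂,
    ← eRk_contract_add_eRk M (C₁ ∪ C₂), ← eRk_contract_add_eRk M (C₁ ∩ C₂),
    (hI.subset subset_union_left).eRk_eq_encard, (hI.subset subset_union_right).eRk_eq_encard,
    hI.eRk_eq_encard, (hI.subset (inter_subset_left.trans subset_union_left)).eRk_eq_encard]
    at hsubmod
  have hcard := encard_union_add_encard_inter C₁ C₂
  have hne : (C₁ ∪ C₂).encard + (C₁ ∩ C₂).encard ≠ ⊤ :=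
    WithTop.add_ne_top.2 ⟨hfin.encard_lt_top.ne, (hfin.subset (inter_subset_left.trans
      subset_union_left)).encard_lt_top.ne⟩
  rw [← ENat.add_le_add_iff_right hne]
  calc _ = (M ／ (C₁ ∪ C₂)).eRk X + (C₁ ∪ C₂).encard
        + ((M ／ (C₁ ∩ C₂)).eRk X + (C₁ ∩ C₂).encard) := by ring
    _ ≤ (M ／ C₁).eRk X + C₁.encard + ((M ／ C₂).eRk X + C₂.encard) := hsubmod
    _ = _ := by rw [hcard]; ring

lemma IsBase.eRk_contract_eq_zero (hB : M.IsBase B) (X : Set α) : (M ／ B).eRk X = 0 := by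
  rw [hB.spanning.contract_eq_loopyOn, eRk_loopyOn]

lemma IsBase.eRk_le_sum_eRk_contract_sdiff {ι : Type*} [Fintype ι] (hB : M.IsBase B)
    (hBfin : B.Finite) {Bp : ι → Set α} (hdisj : Pairwise (Disjoint on Bp))
    (hunion : ⋃ i, Bp i = B) (X : Set α) :
    M.eRk X ≤ ∑ i, (M ／ (B \ Bp i)).eRk X := by
  classical
  suffices h : ∀ s : Finset ι,
      (M ／ (B \ ⋃ i ∈ s, Bp i)).eRk X ≤ ∑ i ∈ s, (M ／ (B \ Bp i)).eRk X by
    simpa [hunion] using h Finset.univ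
  intro s
  induction s using Finset.induction_on with
  | empty => simp [hB.eRk_contract_eq_zero]
  | @insert j s hjs ih =>
    have hsj : Disjoint (⋃ i ∈ s, Bp i) (Bp j) :=
      disjoint_iUnion₂_left.2 fun i hi ↦ hdisj (ne_of_mem_of_not_mem hi hjs)
    have hunion : (B \ ⋃ i ∈ s, Bp i) ∪ (B \ Bp j) = B := by
      rw [← sdiff_inter, hsj.inter_eq, sdiff_empty]
    have hinter : (B \ ⋃ i ∈ s, Bp i) ∩ (B \ Bp j) = B \ ⋃ i ∈ insert j s, Bp i := by
      rw [Finset.set_biUnion_insert, sdiff_inter_sdiff, union_comm]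
    have hsub := eRk_contract_union_add_eRk_contract_inter_le
      (by rw [hunion]; exact hB.indep) (by rw [hunion]; exact hBfin) X
    rw [hunion, hinter, hB.eRk_contract_eq_zero, zero_add] at hsub
    rw [Finset.sum_insert hjs]
    exact hsub.trans (by rw [add_comm]; gcongr)

lemma IsBase.eRank_contract_sdiff (hB : M.IsBase B) (hBfin : B.Finite) (hXB : X ⊆ B) :
    (M ／ (B \ X)).eRank = X.encard := by
  have h := eRk_contract_add_eRk M (B \ X) (M ／ (B \ X)).E
  rw [eRk_ground, (hB.indep.subset sdiff_subset).eRk_eq_encard, contract_ground,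
    sdiff_union_self, Matroid.eRk_eq_eRank subset_union_left,
    ← hB.encard_eq_eRank, ← encard_sdiff_add_encard_of_subset hXB, add_comm _ X.encard] at h
  exact WithTop.add_right_cancel (hBfin.sdiff.encard_lt_top.ne) h

end Matroid

/-- For bases `A, B` of a matroid and a partition `B = B₁ ⊔ ... ⊔ B_k`, there is a
partition `A = A₁ ⊔ ... ⊔ A_k` with `(B \ B_i) ∪ A_i` a basis for every `i`. -/
theorem partition_exchange_into_B {α : Type*} (M : Matroid α) (hfin : M.E.Finite)
    (A B : Set α) (hA : M.IsBase A) (hB : M.IsBase B)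
    (k : ℕ) (Bp : Fin k → Set α)
    (hdisj : ∀ i j, i ≠ j → Disjoint (Bp i) (Bp j))
    (hunion : (⋃ i, Bp i) = B) :
    ∃ Ap : Fin k → Set α,
      (∀ i j, i ≠ j → Disjoint (Ap i) (Ap j)) ∧
      (⋃ i, Ap i) = A ∧
      ∀ i, M.IsBase ((B \ Bp i) ∪ Ap i) := by
  have hAfin : A.Finite := hfin.subset hA.subset_ground
  have hBfin : B.Finite := hfin.subset hB.subset_ground
  obtain ⟨Ap, hAp⟩ := exists_isIndepPartition_of_forall_encard_le_sum_eRk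
    (N := fun i ↦ M ／ (B \ Bp i)) hAfin fun S hS ↦
      (hA.indep.subset hS).eRk_eq_encard ▸ hB.eRk_le_sum_eRk_contract_sdiff hBfin hdisj hunion S
  have hcard : ∀ i, (Ap i).encard = (M ／ (B \ Bp i)).eRank := by
    refine ENat.eq_of_forall_le_of_sum_le (fun i ↦ (hAp.indep i).encard_le_eRank) (le_of_eq ?_)
      (hAp.encard_eq_sum ▸ hAfin.encard_lt_top.ne)
    calc ∑ i, (M ／ (B \ Bp i)).eRank = ∑ i, (Bp i).encard := Finset.sum_congr rfl fun i _ ↦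
          hB.eRank_contract_sdiff hBfin (hunion ▸ subset_iUnion Bp i)
      _ = B.encard := by rw [← finsum_eq_sum_of_fintype, ← encard_iUnion_of_finite hdisj, hunion]
      _ = ∑ i, (Ap i).encard := by rw [hB.encard_eq_encard_of_isBase hA, hAp.encard_eq_sum]
  refine ⟨Ap, hAp.pairwise_disjoint, hAp.iUnion_eq, fun i ↦ ?_⟩
  have hbase := (hAp.indep i).isBase_of_eRk_ge (hAfin.subset (hAp.subset i))
    (by rw [(hAp.indep i).eRk_eq_encard, hcard i])
  exact union_comm (Ap i) _ ▸ ((hB.indep.subset sdiff_subset).contract_isBase_iff.1 hbase).1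
end

section
/- Let M be a matroid on E, let B_1 and B_2 be disjoint bases of M, and let A_1 ⊆ B_1. Define lists L(e) = {1} for e ∈ A_1, L(e) = {2} for e ∈ B_1 \ A_1, and L(e) = {1,2} for e ∈ B_2. If M restricted to B_1 ∪ B_2 admits a proper coloring from these lists, then there exists A_2 ⊆ B_2 such that (B_1 \ A_1) ∪ A_2 and (B_2 \ A_2) ∪ A_1 are both bases of M. -/
/-!
The two colour classes of the colouring are `(B₂ \ A₂) ∪ A₁` and `(B₁ \ A₁) ∪ A₂`, where `A₂` is
the set of elements of `B₂` coloured `2`. They are independent and together cover the disjoint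
union `B₁ ∪ B₂`, which has `2 r` elements; as each has at most `r` elements, both have exactly
`r` and are therefore bases.
-/

open Set

namespace Matroid

variable {α : Type*} {M : Matroid α} {B B₁ B₂ I I₁ I₂ : Set α}

lemma Indep.isBase_of_encard_le [M.RankFinite] (hI : M.Indep I) (hB : M.IsBase B)
    (h : B.encard ≤ I.encard) : M.IsBase I :=
  hI.isBase_of_eRk_ge hI.finite (by rwa [← hB.encard_eq_eRank, hI.eRk_eq_encard])

lemma isBase_and_isBase_of_union_subset [M.RankFinite] (hB₁ : M.IsBase B₁)
    (hB₂ : M.IsBase B₂) (hB : Disjoint B₁ B₂) (hI₁ : M.Indep I₁) (hI₂ : M.Indep I₂)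
    (hcover : B₁ ∪ B₂ ⊆ I₁ ∪ I₂) : M.IsBase I₁ ∧ M.IsBase I₂ := by
  have hr : B₁.encard ≠ ⊤ := encard_ne_top_iff.mpr hB₁.finite
  have hle₁ : I₁.encard ≤ B₁.encard := hB₁.encard_eq_eRank ▸ hI₁.encard_le_eRank
  have hle₂ : I₂.encard ≤ B₁.encard := hB₁.encard_eq_eRank ▸ hI₂.encard_le_eRank
  have hsum : B₁.encard + B₁.encard ≤ I₁.encard + I₂.encard := calc
    B₁.encard + B₁.encard = (B₁ ∪ B₂).encard := by
      rw [encard_union_eq hB, hB₂.encard_eq_encard_of_isBase hB₁]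
    _ ≤ (I₁ ∪ I₂).encard := encard_le_encard hcover
    _ ≤ I₁.encard + I₂.encard := encard_union_le _ _
  exact ⟨hI₁.isBase_of_encard_le hB₁
      ((ENat.add_le_add_iff_right hr).1 (hsum.trans (add_le_add_right hle₂ _))),
    hI₂.isBase_of_encard_le hB₁
      ((ENat.add_le_add_iff_left hr).1 (hsum.trans (add_le_add_left hle₁ _)))⟩

end Matroid

/-- If `B₁, B₂` are disjoint bases, `A₁ ⊆ B₁`, and `M` restricted to `B₁ ∪ B₂`
admits a proper coloring from the lists `{1}` on `A₁`, `{2}` on `B₁ \ A₁` and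
`{1,2}` on `B₂`, then there is `A₂ ⊆ B₂` with `(B₁ \ A₁) ∪ A₂` and
`(B₂ \ A₂) ∪ A₁` both bases. -/
theorem exchange_from_coloring {α : Type*} (M : Matroid α) (hfin : M.E.Finite)
    (B₁ B₂ : Set α) (hB₁ : M.IsBase B₁) (hB₂ : M.IsBase B₂)
    (hdisj : Disjoint B₁ B₂) (A₁ : Set α) (hA₁ : A₁ ⊆ B₁)
    (L : α → Finset ℕ)
    (hL1 : ∀ e ∈ A₁, L e = {1}) (hL2 : ∀ e ∈ B₁ \ A₁, L e = {2})
    (hL3 : ∀ e ∈ B₂, L e = {1, 2})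
    (hcol : ∃ c : α → ℕ, (∀ e ∈ B₁ ∪ B₂, c e ∈ L e) ∧
      ∀ i : ℕ, M.Indep {e ∈ B₁ ∪ B₂ | c e = i}) :
    ∃ A₂ ⊆ B₂, M.IsBase ((B₁ \ A₁) ∪ A₂) ∧ M.IsBase ((B₂ \ A₂) ∪ A₁) := by
  have : M.Finite := ⟨hfin⟩
  obtain ⟨c, hcL, hind⟩ := hcol
  have hc₁ : ∀ e ∈ A₁, c e = 1 := fun e he ↦ by
    simpa [hL1 e he] using hcL e (.inl (hA₁ he))
  have hc₂ : ∀ e ∈ B₁ \ A₁, c e = 2 := fun e he ↦ by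
    simpa [hL2 e he] using hcL e (.inl he.1)
  have hc₃ : ∀ e ∈ B₂, c e = 1 ∨ c e = 2 := fun e he ↦ by
    simpa [hL3 e he] using hcL e (.inr he)
  set A₂ := {e ∈ B₂ | c e = 2}
  have hclass₁ : {e ∈ B₁ ∪ B₂ | c e = 1} = (B₂ \ A₂) ∪ A₁ := by ext e; grind
  have hclass₂ : {e ∈ B₁ ∪ B₂ | c e = 2} = (B₁ \ A₁) ∪ A₂ := by ext e; grind
  have hcover : B₁ ∪ B₂ ⊆ ((B₁ \ A₁) ∪ A₂) ∪ ((B₂ \ A₂) ∪ A₁) := fun e he ↦ by grind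
  exact ⟨A₂, sep_subset _ _, Matroid.isBase_and_isBase_of_union_subset hB₁ hB₂ hdisj
    (hclass₂ ▸ hind 2) (hclass₁ ▸ hind 1) hcover⟩
end

section
/- Let M be a matroid on a finite ground set E, let ℓ : E → ℕ, and for each i let Q_i^ℓ = {e ∈ E : i ≤ ℓ(e)}. Then M is colorable from the lists {1,...,ℓ(e)} if and only if for every A ⊆ E, Σ_i r(A ∩ Q_i^ℓ) ≥ |A|. -/
/-!
A colouring from the lists `{1, …, ℓ e}` is a partition of `E` into `M`-independent sets
`I_i ⊆ Q_i`, so this is Edmonds' matroid partition theorem for nested `Q_i`, and necessity is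
counting. For sufficiency take a partial colouring with independent classes and the fewest
uncoloured elements, and an uncoloured `x`. Put an arc `u → v` when `u` could take the colour
of `v` were `v` to give it up, and call `u` a sink if it can be (re)coloured directly.
If a sink is reachable from `x`, exchange colours along a shortest path one arc at a time:
once `x` has taken the colour of the next vertex `y`, the rest of the path still leads from the
now uncoloured `y` to a sink, since minimality forbids arcs from `x` to later vertices, and those
are exactly the arcs the exchange could destroy. Otherwise the set `A` reachable from `x` is
closed under arcs and sink-free, so each `A ∩ Q_i` is spanned by the `i`-th colour class
inside `A`, and `∑ i, r(A ∩ Q_i)` is at most the number of coloured elements of `A`, less than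
`|A|`.
-/

noncomputable def Matroid.rankOn {α : Type*} (M : Matroid α) (A : Set α) : ℕ :=
  sSup {n : ℕ | ∃ I : Set α, I ⊆ A ∧ M.Indep I ∧ I.ncard = n}

open Set Function Relation

lemma ncard_sep_ne_none_eq_sum {α ι : Type*} {A : Set α} (hA : A.Finite) (c : α → Option ι)
    {s : Finset ι} (hs : ∀ e ∈ A, ∀ i, c e = some i → i ∈ s) :
    {e ∈ A | c e ≠ none}.ncard = ∑ i ∈ s, {e ∈ A | c e = some i}.ncard := by
  have hunion : {e ∈ A | c e ≠ none} = ⋃ i ∈ (s : Set ι), {e ∈ A | c e = some i} := by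
    ext e
    simp only [mem_sep_iff, mem_iUnion, Finset.mem_coe, exists_prop, Option.ne_none_iff_exists']
    constructor
    · rintro ⟨he, i, hi⟩
      exact ⟨i, hs e he i hi, he, hi⟩
    · rintro ⟨i, -, he, hi⟩
      exact ⟨he, i, hi⟩
  rw [hunion, s.finite_toSet.ncard_biUnion (fun i _ ↦ hA.sep _), finsum_mem_coe_finset]
  intro i _ j _ hij
  exact Set.disjoint_left.2 fun e hi hj ↦ hij (Option.some_injective _ (hi.2.symm.trans hj.2))

namespace Matroid

variable {α ι : Type*} {M : Matroid α} {I K X : Set α} {x y : α}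

lemma Indep.ncard_le_rankOn (hI : M.Indep I) (hIX : I ⊆ X) (hX : X.Finite) :
    I.ncard ≤ M.rankOn X :=
  le_csSup ⟨X.ncard, by rintro n ⟨J, hJX, -, rfl⟩; exact ncard_le_ncard hJX hX⟩ ⟨I, hIX, hI, rfl⟩

lemma Indep.rankOn_le_ncard_of_subset_closure (hK : M.Indep K) (hKfin : K.Finite)
    (hX : X ⊆ M.closure K) :
    M.rankOn X ≤ K.ncard := by
  refine csSup_le ⟨0, ∅, empty_subset X, M.empty_indep, ncard_empty α⟩ ?_
  rintro n ⟨I, hIX, hI, rfl⟩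
  have hle : I.encard ≤ K.ncard :=
    calc I.encard ≤ M.eRk (M.closure K) := hI.encard_le_eRk_of_subset (hIX.trans hX)
      _ = K.ncard := by rw [eRk_closure_eq, hK.eRk_eq_encard, hKfin.cast_ncard_eq]
  exact (encard_le_coe_iff_finite_ncard_le.1 hle).2

lemma closure_insert_sdiff_singleton_eq (hy : y ∈ X) (hx : x ∈ M.closure X)
    (hx' : x ∉ M.closure (X \ {y})) : M.closure (insert x (X \ {y})) = M.closure X := by
  have hX : insert y (X \ {y}) = X := insert_sdiff_self_of_mem hy
  rw [closure_insert_congr ⟨by rwa [hX], hx'⟩, hX]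

lemma Indep.mem_closure_inter_of_forall_mem_closure_sdiff (hK : M.Indep K)
    (hx : x ∈ M.closure K) (h : ∀ y ∈ K \ X, x ∈ M.closure (K \ {y})) :
    x ∈ M.closure (K ∩ X) := by
  obtain hKX | hne := (K \ X).eq_empty_or_nonempty
  · rwa [inter_eq_left.2 (sdiff_eq_empty.1 hKX)]
  have hInter : ⋂ y ∈ K \ X, K \ {y} = K ∩ X := by
    ext e
    simp only [mem_iInter, mem_sdiff, mem_singleton_iff, mem_inter_iff]
    constructor
    · intro he
      obtain ⟨y₀, hy₀⟩ := hne
      exact ⟨(he y₀ hy₀).1, by_contra fun heX ↦ (he e ⟨(he y₀ hy₀).1, heX⟩).2 rfl⟩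
    · rintro ⟨heK, heX⟩ y ⟨-, hyX⟩
      exact ⟨heK, by rintro rfl; exact hyX heX⟩
  rw [← hInter, closure_biInter_eq_biInter_closure_of_biUnion_indep hne (I := fun y ↦ K \ {y})
    (hK.subset (iUnion₂_subset fun _ _ ↦ sdiff_subset))]
  exact mem_iInter₂.2 h

variable {L : α → Set ι} {c : α → Option ι} {s : Finset ι} {A : Set α} {i j : ι} {m n : ℕ}

def colorClass (M : Matroid α) (c : α → Option ι) (i : ι) : Set α :=
  {e ∈ M.E | c e = some i}

lemma colorClass_update_self [DecidableEq α] (hx : x ∈ M.E) :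
    M.colorClass (update c x (some i)) i = insert x (M.colorClass c i) := by
  ext e
  obtain rfl | hne := eq_or_ne e x <;> simp [colorClass, *]

lemma colorClass_update_of_ne [DecidableEq α] {o : Option ι} (ho : o ≠ some i) :
    M.colorClass (update c x o) i = M.colorClass c i \ {x} := by
  ext e
  obtain rfl | hne := eq_or_ne e x <;> simp [colorClass, *]

/-- Uncoloured elements are those with `c e = none`. -/
structure IsPartialListColoring (M : Matroid α) (L : α → Set ι) (c : α → Option ι) : Prop where
  mem_list : ∀ e ∈ M.E, ∀ i, c e = some i → i ∈ L e
  indep : ∀ i, M.Indep (M.colorClass c i)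

lemma isPartialListColoring_none : IsPartialListColoring M L fun _ ↦ none where
  mem_list _ _ _ h := by simp at h
  indep i := by
    convert M.empty_indep
    simp [colorClass]

namespace IsPartialListColoring

lemma indep_sep (hc : IsPartialListColoring M L c) (hA : A ⊆ M.E) (i : ι) :
    M.Indep {e ∈ A | c e = some i} :=
  (hc.indep i).subset fun _ he ↦ ⟨hA he.1, he.2⟩

lemma update_none [DecidableEq α] (hc : IsPartialListColoring M L c) (x : α) :
    IsPartialListColoring M L (update c x none) where
  mem_list e he i h := by
    obtain rfl | hne := eq_or_ne e x
    · simp at h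
    · exact hc.mem_list e he i (by rwa [update_of_ne hne] at h)
  indep i := by
    rw [colorClass_update_of_ne (by simp)]
    exact (hc.indep i).subset sdiff_subset

lemma update_some [DecidableEq α] (hc : IsPartialListColoring M L c) (hx : x ∈ M.E)
    (hi : i ∈ L x) (hxi : x ∉ M.closure (M.colorClass c i)) :
    IsPartialListColoring M L (update c x (some i)) where
  mem_list e he j h := by
    obtain rfl | hne := eq_or_ne e x
    · obtain rfl : i = j := by simpa using h
      exact hi
    · exact hc.mem_list e he j (by rwa [update_of_ne hne] at h)
  indep j := by
    obtain rfl | hji := eq_or_ne j i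
    · rw [colorClass_update_self hx]
      exact (hc.indep j).insert_indep_iff.2 (Or.inl ⟨hx, hxi⟩)
    · rw [colorClass_update_of_ne (by simpa using hji.symm)]
      exact (hc.indep j).subset sdiff_subset

lemma ncard_le_sum_rankOn (hc : IsPartialListColoring M L c) (hfin : M.E.Finite)
    (hs : ∀ e ∈ M.E, L e ⊆ s) (htot : ∀ e ∈ M.E, c e ≠ none) (hA : A ⊆ M.E) :
    A.ncard ≤ ∑ i ∈ s, M.rankOn (A ∩ {e ∈ M.E | i ∈ L e}) := by
  have hAfin := hfin.subset hA
  calc A.ncard = {e ∈ A | c e ≠ none}.ncard := by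
        rw [sep_eq_self_iff_mem_true.2 fun e he ↦ htot e (hA he)]
    _ = ∑ i ∈ s, {e ∈ A | c e = some i}.ncard :=
        ncard_sep_ne_none_eq_sum hAfin c fun e he i hi ↦ hs e (hA he) (hc.mem_list e (hA he) i hi)
    _ ≤ _ := by
        refine Finset.sum_le_sum fun i _ ↦
          (hc.indep_sep hA i).ncard_le_rankOn ?_ (hAfin.inter_of_left _)
        exact fun e he ↦ ⟨he.1, hA he.1, hc.mem_list e (hA he.1) i he.2⟩

end IsPartialListColoring

/-- `x → y` when `x` could take the colour of `y` if `y` gave it up. -/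
def ExchangeArc (M : Matroid α) (L : α → Set ι) (c : α → Option ι) (x y : α) : Prop :=
  ∃ i ∈ L x, y ∈ M.colorClass c i ∧ x ∉ M.closure (M.colorClass c i \ {y})

def IsSink (M : Matroid α) (L : α → Set ι) (c : α → Option ι) (x : α) : Prop :=
  ∃ i ∈ L x, x ∉ M.closure (M.colorClass c i)

def ReachesSinkWithin (M : Matroid α) (L : α → Set ι) (c : α → Option ι) : ℕ → α → Prop
  | 0, x => M.IsSink L c x
  | n + 1, x => M.IsSink L c x ∨ ∃ y, M.ExchangeArc L c x y ∧ M.ReachesSinkWithin L c n y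

lemma ExchangeArc.mem_ground (h : M.ExchangeArc L c x y) : y ∈ M.E := by
  obtain ⟨i, -, hy, -⟩ := h
  exact hy.1

lemma IsSink.reachesSinkWithin (h : M.IsSink L c x) : ∀ n, M.ReachesSinkWithin L c n x
  | 0 => h
  | _ + 1 => Or.inl h

lemma ReachesSinkWithin.mono (h : M.ReachesSinkWithin L c m x) (hmn : m ≤ n) :
    M.ReachesSinkWithin L c n x := by
  induction m generalizing n x with
  | zero => exact IsSink.reachesSinkWithin h n
  | succ m ih =>
    obtain ⟨n, rfl⟩ : ∃ k, n = k + 1 := ⟨n - 1, by omega⟩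
    rcases h with h | ⟨y, hxy, hy⟩
    · exact Or.inl h
    · exact Or.inr ⟨y, hxy, ih hy (by omega)⟩

lemma exists_reachesSinkWithin_of_reflTransGen (hxy : ReflTransGen (M.ExchangeArc L c) x y)
    (hy : M.IsSink L c y) : ∃ n, M.ReachesSinkWithin L c n x := by
  induction hxy using ReflTransGen.head_induction_on with
  | refl => exact ⟨0, hy⟩
  | head hxz _ ih =>
    obtain ⟨n, hn⟩ := ih
    exact ⟨n + 1, Or.inr ⟨_, hxz, hn⟩⟩

section Exchange

variable [DecidableEq α] {u v z : α}

def exchangeColor (c : α → Option ι) (x y : α) : α → Option ι :=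
  update (update c y none) x (c y)

lemma colorClass_exchangeColor_self (hx : x ∈ M.E) (hy : c y = some i) :
    M.colorClass (exchangeColor c x y) i = insert x (M.colorClass c i \ {y}) := by
  rw [exchangeColor, hy, colorClass_update_self hx, colorClass_update_of_ne (by simp)]

lemma colorClass_exchangeColor_of_ne (hcx : c x = none) (hy : c y = some i) (hji : j ≠ i) :
    M.colorClass (exchangeColor c x y) j = M.colorClass c j := by
  rw [exchangeColor, hy, colorClass_update_of_ne (by simpa using hji.symm),
    colorClass_update_of_ne (by simp), sdiff_singleton_eq_self, sdiff_singleton_eq_self]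
  · exact fun h ↦ hji (Option.some_injective _ (h.2.symm.trans hy))
  · exact fun h ↦ by simpa [hcx] using h.1.2

lemma IsPartialListColoring.exchangeColor (hc : IsPartialListColoring M L c) (hx : x ∈ M.E)
    (hxy : M.ExchangeArc L c x y) : IsPartialListColoring M L (exchangeColor c x y) := by
  obtain ⟨i, hi, hy, hxi⟩ := hxy
  rw [Matroid.exchangeColor, hy.2]
  exact (hc.update_none y).update_some hx hi (by rwa [colorClass_update_of_ne (by simp)])

lemma closure_colorClass_exchangeColor (hx : x ∈ M.E) (hcx : c x = none)
    (hxy : M.ExchangeArc L c x y) (hxs : ¬ M.IsSink L c x) (j : ι) :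
    M.closure (M.colorClass (exchangeColor c x y) j) = M.closure (M.colorClass c j) := by
  obtain ⟨i, hi, hy, hxi⟩ := hxy
  obtain rfl | hji := eq_or_ne j i
  · have hcl : x ∈ M.closure (M.colorClass c j) := by
      by_contra h
      exact hxs ⟨j, hi, h⟩
    rw [colorClass_exchangeColor_self hx hy.2]
    exact closure_insert_sdiff_singleton_eq hy hcl hxi
  · rw [colorClass_exchangeColor_of_ne hcx hy.2 hji]

lemma isSink_exchangeColor_iff (hx : x ∈ M.E) (hcx : c x = none) (hxy : M.ExchangeArc L c x y)
    (hxs : ¬ M.IsSink L c x) : M.IsSink L (exchangeColor c x y) z ↔ M.IsSink L c z := by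
  simp only [IsSink, closure_colorClass_exchangeColor hx hcx hxy hxs]

lemma ExchangeArc.exchangeColor (huv : M.ExchangeArc L c u v) (hx : x ∈ M.E) (hcx : c x = none)
    (hxy : M.ExchangeArc L c x y) (hvy : v ≠ y) (hxv : ¬ M.ExchangeArc L c x v) :
    M.ExchangeArc L (exchangeColor c x y) u v := by
  obtain ⟨j, hj, hv, huv⟩ := huv
  obtain ⟨i, hi, hy, hxi⟩ := hxy
  refine ⟨j, hj, ?_⟩
  obtain rfl | hji := eq_or_ne j i
  · have hvx : v ≠ x := by
      rintro rfl
      simp [colorClass, hcx] at hv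
    have hxv_cl : x ∈ M.closure (M.colorClass c j \ {v}) := by
      by_contra h
      exact hxv ⟨j, hi, hv, h⟩
    -- `x` spans `y` modulo `K \ {v, y}`, so it can replace `y` in `K \ {v}`.
    rw [colorClass_exchangeColor_self hx hy.2, insert_sdiff_of_notMem _ (by simpa using hvx.symm),
      Set.sdiff_sdiff_comm,
      closure_insert_sdiff_singleton_eq (show y ∈ _ \ {v} from ⟨hy, hvy.symm⟩) hxv_cl
        fun h ↦ hxi (M.closure_subset_closure (sdiff_subset_sdiff_left sdiff_subset) h)]
    exact ⟨.inr ⟨hv, hvy⟩, huv⟩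
  · rw [colorClass_exchangeColor_of_ne hcx hy.2 hji]
    exact ⟨hv, huv⟩

lemma ReachesSinkWithin.exchangeColor (hv : M.ReachesSinkWithin L c n v) (hx : x ∈ M.E)
    (hcx : c x = none) (hxy : M.ExchangeArc L c x y)
    (hxn : ¬ M.ReachesSinkWithin L c n x) : M.ReachesSinkWithin L (exchangeColor c x y) n v := by
  have hxs : ¬ M.IsSink L c x := fun h ↦ hxn (h.reachesSinkWithin n)
  induction n generalizing v with
  | zero => exact (isSink_exchangeColor_iff hx hcx hxy hxs).2 hv
  | succ n ih =>
    rcases hv with hv | ⟨w, hvw, hw⟩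
    · exact Or.inl ((isSink_exchangeColor_iff hx hcx hxy hxs).2 hv)
    refine Or.inr ⟨w, hvw.exchangeColor hx hcx hxy ?_ ?_,
      ih hw fun h ↦ hxn (h.mono n.le_succ)⟩
    · rintro rfl
      exact hxn (Or.inr ⟨_, hxy, hw⟩)
    · exact fun hxw ↦ hxn (Or.inr ⟨w, hxw, hw⟩)

end Exchange

namespace IsPartialListColoring

lemma exists_extend_of_isSink [DecidableEq α] (hc : IsPartialListColoring M L c) (hx : x ∈ M.E)
    (hxs : M.IsSink L c x) :
    ∃ c', IsPartialListColoring M L c' ∧ c' x ≠ none ∧ ∀ e, c e ≠ none → c' e ≠ none := by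
  obtain ⟨i, hi, hxi⟩ := hxs
  refine ⟨update c x (some i), hc.update_some hx hi hxi, by simp, fun e he ↦ ?_⟩
  obtain rfl | hex := eq_or_ne e x
  · simp
  · rwa [update_of_ne hex]

lemma exists_extend_of_reachesSinkWithin (hc : IsPartialListColoring M L c) (hx : x ∈ M.E)
    (hcx : c x = none) (h : M.ReachesSinkWithin L c n x) :
    ∃ c', IsPartialListColoring M L c' ∧ c' x ≠ none ∧ ∀ e, c e ≠ none → c' e ≠ none := by
  classical
  induction n using Nat.strong_induction_on generalizing c x with
  | _ n ih =>
  by_cases hmin : ∃ m < n, M.ReachesSinkWithin L c m x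
  · obtain ⟨m, hmn, hm⟩ := hmin
    exact ih m hmn hc hx hcx hm
  push Not at hmin
  cases n with
  | zero => exact hc.exists_extend_of_isSink hx h
  | succ m =>
    rcases h with h | ⟨y, hxy, hy⟩
    · exact hc.exists_extend_of_isSink hx h
    have hxy_ne : x ≠ y := by
      rintro rfl
      obtain ⟨i, -, hi, -⟩ := hxy
      simp [colorClass, hcx] at hi
    obtain ⟨c', hc', hc'y, hmono⟩ := ih m m.lt_succ_self (hc.exchangeColor hx hxy)
      hxy.mem_ground (by simp [Matroid.exchangeColor, hxy_ne.symm])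
      (hy.exchangeColor hx hcx hxy (hmin m m.lt_succ_self))
    refine ⟨c', hc', hmono x ?_, fun e he ↦ ?_⟩
    · obtain ⟨i, -, hi, -⟩ := hxy
      simp [Matroid.exchangeColor, hi.2]
    obtain rfl | hey := eq_or_ne e y
    · exact hc'y
    have hex : e ≠ x := by
      rintro rfl
      exact he hcx
    exact hmono e (by rwa [Matroid.exchangeColor, update_of_ne hex, update_of_ne hey])

lemma subset_closure_of_forall_exchangeArc (hc : IsPartialListColoring M L c)
    (hclosed : ∀ a ∈ A, ∀ b, M.ExchangeArc L c a b → b ∈ A) (hsink : ∀ a ∈ A, ¬ M.IsSink L c a)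
    (i : ι) : A ∩ {e ∈ M.E | i ∈ L e} ⊆ M.closure {e ∈ A | c e = some i} := by
  rintro x ⟨hxA, -, hi⟩
  have hx : x ∈ M.closure (M.colorClass c i) := by
    by_contra h
    exact hsink x hxA ⟨i, hi, h⟩
  refine M.closure_subset_closure
    (show M.colorClass c i ∩ A ⊆ {e ∈ A | c e = some i} from fun e he ↦ ⟨he.2, he.1.2⟩)
    ((hc.indep i).mem_closure_inter_of_forall_mem_closure_sdiff hx fun y hy ↦ ?_)
  by_contra h
  exact hy.2 (hclosed x hxA y ⟨i, hi, hy.1, h⟩)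

lemma sum_rankOn_le_ncard (hc : IsPartialListColoring M L c) (hfin : M.E.Finite)
    (hs : ∀ e ∈ M.E, L e ⊆ s) (hA : A ⊆ M.E)
    (hclosed : ∀ a ∈ A, ∀ b, M.ExchangeArc L c a b → b ∈ A) (hsink : ∀ a ∈ A, ¬ M.IsSink L c a) :
    ∑ i ∈ s, M.rankOn (A ∩ {e ∈ M.E | i ∈ L e}) ≤ {e ∈ A | c e ≠ none}.ncard := by
  have hAfin := hfin.subset hA
  rw [ncard_sep_ne_none_eq_sum hAfin c fun e he i hi ↦ hs e (hA he) (hc.mem_list e (hA he) i hi)]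
  exact Finset.sum_le_sum fun i _ ↦
    (hc.indep_sep hA i).rankOn_le_ncard_of_subset_closure (hAfin.sep _)
    (hc.subset_closure_of_forall_exchangeArc hclosed hsink i)

lemma exists_extend (hc : IsPartialListColoring M L c) (hfin : M.E.Finite)
    (hs : ∀ e ∈ M.E, L e ⊆ s)
    (hrank : ∀ A ⊆ M.E, A.ncard ≤ ∑ i ∈ s, M.rankOn (A ∩ {e ∈ M.E | i ∈ L e}))
    (hx : x ∈ M.E) (hcx : c x = none) :
    ∃ c', IsPartialListColoring M L c' ∧ c' x ≠ none ∧ ∀ e, c e ≠ none → c' e ≠ none := by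
  set A := {y | ReflTransGen (M.ExchangeArc L c) x y}
  by_cases hA : ∃ y ∈ A, M.IsSink L c y
  · obtain ⟨y, hxy, hy⟩ := hA
    obtain ⟨n, hn⟩ := exists_reachesSinkWithin_of_reflTransGen hxy hy
    exact hc.exists_extend_of_reachesSinkWithin hx hcx hn
  push Not at hA
  have hAE : A ⊆ M.E := fun y hy ↦ by
    induction hy with
    | refl => exact hx
    | tail _ h _ => exact h.mem_ground
  have hlt : {e ∈ A | c e ≠ none}.ncard < A.ncard :=
    ncard_lt_ncard ((ssubset_iff_of_subset (sep_subset _ _)).2 ⟨x, .refl, fun h ↦ h.2 hcx⟩)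
      (hfin.subset hAE)
  have hle := hc.sum_rankOn_le_ncard hfin hs hAE (fun a ha b hab ↦ ReflTransGen.tail ha hab) hA
  have := hrank A hAE
  omega

end IsPartialListColoring

theorem exists_isPartialListColoring_forall_ne_none (hfin : M.E.Finite) (hs : ∀ e ∈ M.E, L e ⊆ s)
    (hrank : ∀ A ⊆ M.E, A.ncard ≤ ∑ i ∈ s, M.rankOn (A ∩ {e ∈ M.E | i ∈ L e})) :
    ∃ c, IsPartialListColoring M L c ∧ ∀ e ∈ M.E, c e ≠ none := by
  obtain ⟨c, hc, hmin⟩ := (measure fun c : α → Option ι ↦ {e ∈ M.E | c e = none}.ncard).wf.has_min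
    {c | IsPartialListColoring M L c} ⟨_, isPartialListColoring_none⟩
  refine ⟨c, hc, fun x hx hcx ↦ ?_⟩
  obtain ⟨c', hc', hc'x, hmono⟩ := hc.exists_extend hfin hs hrank hx hcx
  have hsub : {e ∈ M.E | c' e = none} ⊆ {e ∈ M.E | c e = none} := fun e he ↦
    ⟨he.1, by_contra fun h ↦ hmono e h he.2⟩
  exact hmin c' hc' (ncard_lt_ncard ((ssubset_iff_of_subset hsub).2
    ⟨x, ⟨hx, hcx⟩, fun h ↦ hc'x h.2⟩) (hfin.sep _))

theorem exists_listColoring_iff [Nonempty ι] (hfin : M.E.Finite) (hs : ∀ e ∈ M.E, L e ⊆ s) :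
    (∃ c : α → ι, (∀ e ∈ M.E, c e ∈ L e) ∧ ∀ i, M.Indep {e ∈ M.E | c e = i}) ↔
      ∀ A ⊆ M.E, A.ncard ≤ ∑ i ∈ s, M.rankOn (A ∩ {e ∈ M.E | i ∈ L e}) := by
  constructor
  · rintro ⟨c, hcL, hind⟩ A hA
    have hc : IsPartialListColoring M L (some ∘ c) :=
      ⟨fun e he i h ↦ Option.some_injective _ h ▸ hcL e he,
        fun i ↦ by simpa [colorClass] using hind i⟩
    exact hc.ncard_le_sum_rankOn hfin hs (fun e _ ↦ Option.some_ne_none _) hA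
  · intro hrank
    obtain ⟨c, hc, htot⟩ := exists_isPartialListColoring_forall_ne_none hfin hs hrank
    refine ⟨fun e ↦ (c e).getD (Classical.arbitrary ι), fun e he ↦ ?_,
      fun i ↦ (hc.indep i).subset ?_⟩
    · obtain ⟨i, hi⟩ := Option.ne_none_iff_exists'.1 (htot e he)
      simpa [hi] using hc.mem_list e he i hi
    · rintro e ⟨he, rfl⟩
      obtain ⟨i, hi⟩ := Option.ne_none_iff_exists'.1 (htot e he)
      simp [colorClass, he, hi]

end Matroid

/-- With `Q_i^ℓ = {e ∈ E : i ≤ ℓ(e)}`, a matroid is colorable from the lists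
`{1,...,ℓ(e)}` if and only if `∑ i, r(A ∩ Q_i^ℓ) ≥ |A|` for every `A ⊆ E`. -/
theorem initial_segment_colorable_iff_rank_condition {α : Type*} (M : Matroid α)
    (hfin : M.E.Finite) (ℓ : α → ℕ) (d : ℕ) (hd : ∀ e ∈ M.E, ℓ e ≤ d) :
    (∃ c : α → ℕ, (∀ e ∈ M.E, 1 ≤ c e ∧ c e ≤ ℓ e) ∧
        ∀ i : ℕ, M.Indep {e ∈ M.E | c e = i}) ↔
    (∀ A : Set α, A ⊆ M.E →
        ∑ i ∈ Finset.Icc 1 d, M.rankOn (A ∩ {e ∈ M.E | i ≤ ℓ e}) ≥ A.ncard) := by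
  have hs : ∀ e ∈ M.E, Icc 1 (ℓ e) ⊆ (Finset.Icc 1 d : Set ℕ) := fun e he i hi ↦ by
    simpa using ⟨hi.1, hi.2.trans (hd e he)⟩
  have hQ (A : Set α) : ∑ i ∈ Finset.Icc 1 d, M.rankOn (A ∩ {e ∈ M.E | 1 ≤ i ∧ i ≤ ℓ e}) =
      ∑ i ∈ Finset.Icc 1 d, M.rankOn (A ∩ {e ∈ M.E | i ≤ ℓ e}) :=
    Finset.sum_congr rfl fun i hi ↦ by simp [(Finset.mem_Icc.1 hi).1]
  simpa only [mem_Icc, hQ, ge_iff_le] using M.exists_listColoring_iff hfin hs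
end
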